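/- arXiv:2510.17992 — 9 statements merged into one kernel-verified Lean document; each statement's English description precedes it below -/
import Mathlib

section
/- Let 0 ≤ τ₁ < τ₂, let α, β ≥ 0 and θ ∈ [0,1). There exists a constant c > 0 depending only on α, β and θ with the following property: if f : [τ₁,τ₂] → ℝ is nonnegative and bounded and there exist constants A₁, A₂, B ≥ 0 such that f(s) ≤ θ·f(t) + A₁·(t−s)^(−α) + A₂·(t−s)^(−β) + B for all τ₁ ≤ s < t ≤ τ₂, then f(τ₁) ≤ c·[A₁·(τ₂−τ₁)^(−α) + A₂·(τ₂−τ₁)^(−β) + B]. -/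
/-!
Put `tₙ = τ₂ - λⁿ (τ₂ - τ₁)` for some `λ ∈ (0, 1)`, so that `t₀ = τ₁` and
`tₙ₊₁ - tₙ = λⁿ (1 - λ)(τ₂ - τ₁)`. Iterating the hypothesis along `t₀ < t₁ < ⋯` gives
`f τ₁ ≤ θⁿ f(tₙ) + ∑_{i<n} θⁱ (A₁ (tᵢ₊₁ - tᵢ)^(-α) + A₂ (tᵢ₊₁ - tᵢ)^(-β) + B)`.
The first term tends to `0` since `f` is bounded, and the series is a sum of three geometric
series with ratios `θ λ^(-α)`, `θ λ^(-β)` and `θ`; these are `< 1` once `λ` is close enough to `1`.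
-/

open Filter Topology Set Finset

theorem le_of_le_mul_succ_add_of_hasSum {θ M S : ℝ} {g e : ℕ → ℝ} (hθ0 : 0 ≤ θ) (hθ1 : θ < 1)
    (hM : ∀ n, g n ≤ M) (hg : ∀ n, g n ≤ θ * g (n + 1) + e n)
    (he : HasSum (fun n ↦ θ ^ n * e n) S) : g 0 ≤ S := by
  have iterate : ∀ n, g 0 ≤ θ ^ n * g n + ∑ i ∈ range n, θ ^ i * e i := by
    intro n
    induction n with
    | zero => simp
    | succ n ih =>
      have step := mul_le_mul_of_nonneg_left (hg n) (pow_nonneg hθ0 n)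
      rw [mul_add, ← mul_assoc, ← pow_succ] at step
      rw [sum_range_succ]
      linarith
  have hlim : Tendsto (fun n ↦ θ ^ n * M + ∑ i ∈ range n, θ ^ i * e i) atTop (𝓝 (0 * M + S)) :=
    ((tendsto_pow_atTop_nhds_zero_of_lt_one hθ0 hθ1).mul_const M).add he.tendsto_sum_nat
  rw [zero_mul, zero_add] at hlim
  refine ge_of_tendsto' hlim fun n ↦ (iterate n).trans ?_
  exact add_le_add_left (mul_le_mul_of_nonneg_left (hM n) (pow_nonneg hθ0 n)) _

theorem le_of_le_mul_add_of_hasSum_geometric {f E : ℝ → ℝ} {θ lam τ₁ τ₂ M S : ℝ}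
    (hθ0 : 0 ≤ θ) (hθ1 : θ < 1) (hlam0 : 0 < lam) (hlam1 : lam < 1) (hτ : τ₁ < τ₂)
    (hM : ∀ t ∈ Icc τ₁ τ₂, f t ≤ M)
    (hf : ∀ s t, τ₁ ≤ s → s < t → t ≤ τ₂ → f s ≤ θ * f t + E (t - s))
    (hE : HasSum (fun n : ℕ ↦ θ ^ n * E (lam ^ n * ((1 - lam) * (τ₂ - τ₁)))) S) :
    f τ₁ ≤ S := by
  set t : ℕ → ℝ := fun n ↦ τ₂ - lam ^ n * (τ₂ - τ₁)
  have ht_mem : ∀ n, t n ∈ Icc τ₁ τ₂ := fun n ↦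
    ⟨by nlinarith [pow_le_one₀ hlam0.le hlam1.le (n := n)], by nlinarith [pow_pos hlam0 n]⟩
  have ht_gap : ∀ n, t (n + 1) - t n = lam ^ n * ((1 - lam) * (τ₂ - τ₁)) := fun n ↦ by
    simp only [t]; ring
  have ht_lt (n : ℕ) : t n < t (n + 1) := by
    have := sub_pos.2 hlam1
    have := sub_pos.2 hτ
    exact sub_pos.1 (ht_gap n ▸ by positivity)
  have key := le_of_le_mul_succ_add_of_hasSum (g := f ∘ t) hθ0 hθ1
    (fun n ↦ hM _ (ht_mem n))
    (fun n ↦ by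
      simpa only [Function.comp, ht_gap] using
        hf _ _ (ht_mem n).1 (ht_lt n) (ht_mem (n + 1)).2)
    hE
  simpa [t] using key

theorem hasSum_pow_mul_mul_rpow {θ lam d A p : ℝ} (hθ : 0 ≤ θ) (hlam0 : 0 < lam)
    (hlam1 : lam ≤ 1) (hd : 0 ≤ d) (hq : θ * lam ^ p < 1) :
    HasSum (fun n : ℕ ↦ θ ^ n * (A * (lam ^ n * ((1 - lam) * d)) ^ p))
      ((1 - lam) ^ p * (1 - θ * lam ^ p)⁻¹ * (A * d ^ p)) := by
  have hq0 : 0 ≤ θ * lam ^ p := mul_nonneg hθ (Real.rpow_nonneg hlam0.le p)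
  have hterm (n : ℕ) : θ ^ n * (A * (lam ^ n * ((1 - lam) * d)) ^ p)
      = (1 - lam) ^ p * (A * d ^ p) * (θ * lam ^ p) ^ n := by
    rw [Real.mul_rpow (pow_nonneg hlam0.le n) (mul_nonneg (sub_nonneg.2 hlam1) hd),
      Real.mul_rpow (sub_nonneg.2 hlam1) hd, ← Real.rpow_pow_comm hlam0.le, mul_pow]
    ring
  rw [mul_right_comm]
  simpa only [hterm] using
    (hasSum_geometric_of_lt_one hq0 hq).mul_left ((1 - lam) ^ p * (A * d ^ p))

theorem eventually_mul_rpow_lt_one {θ : ℝ} (hθ : θ < 1) (p : ℝ) :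
    ∀ᶠ lam in 𝓝 (1 : ℝ), θ * lam ^ p < 1 := by
  have hcont : ContinuousAt (fun lam : ℝ ↦ θ * lam ^ p) 1 :=
    continuousAt_const.mul (Real.continuousAt_rpow_const 1 p (Or.inl one_ne_zero))
  exact hcont.eventually (eventually_lt_nhds (by simpa using hθ))

theorem mul_add_mul_add_mul_le {a b c x y z : ℝ} (ha : 0 ≤ a) (hb : 0 ≤ b) (hc : 0 ≤ c)
    (hx : 0 ≤ x) (hy : 0 ≤ y) (hz : 0 ≤ z) :
    a * x + b * y + c * z ≤ (a + b + c) * (x + y + z) := by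
  nlinarith [mul_nonneg ha hy, mul_nonneg ha hz, mul_nonneg hb hx, mul_nonneg hb hz,
    mul_nonneg hc hx, mul_nonneg hc hy]

theorem iteration_lemma_general (α β θ : ℝ)
    (hθ0 : 0 ≤ θ) (hθ1 : θ < 1) :
    ∃ c : ℝ, 0 < c ∧
      ∀ (τ₁ τ₂ : ℝ) (f : ℝ → ℝ) (A₁ A₂ B : ℝ),
        0 ≤ τ₁ → τ₁ < τ₂ →
        (∀ t ∈ Set.Icc τ₁ τ₂, 0 ≤ f t) →
        BddAbove (f '' Set.Icc τ₁ τ₂) →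
        0 ≤ A₁ → 0 ≤ A₂ → 0 ≤ B →
        (∀ s t : ℝ, τ₁ ≤ s → s < t → t ≤ τ₂ →
          f s ≤ θ * f t + A₁ * (t - s) ^ (-α) + A₂ * (t - s) ^ (-β) + B) →
        f τ₁ ≤ c * (A₁ * (τ₂ - τ₁) ^ (-α) + A₂ * (τ₂ - τ₁) ^ (-β) + B) := by
  obtain ⟨lam, ⟨hqα, hqβ⟩, hlam0, hlam1⟩ := (((eventually_mul_rpow_lt_one hθ1 (-α)).and
    (eventually_mul_rpow_lt_one hθ1 (-β))).filter_mono nhdsWithin_le_nhds |>.and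
    (Ioo_mem_nhdsLT one_pos)).exists
  have h1lam := sub_pos.2 hlam1
  have h1qα := sub_pos.2 hqα
  have h1qβ := sub_pos.2 hqβ
  have h1θ := sub_pos.2 hθ1
  set C₁ := (1 - lam) ^ (-α) * (1 - θ * lam ^ (-α))⁻¹
  set C₂ := (1 - lam) ^ (-β) * (1 - θ * lam ^ (-β))⁻¹
  set C₃ := (1 - θ)⁻¹
  refine ⟨C₁ + C₂ + C₃, by positivity, ?_⟩
  intro τ₁ τ₂ f A₁ A₂ B _ hτ _ ⟨M, hM⟩ hA₁ hA₂ hB hf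
  have hd := sub_pos.2 hτ
  have hsum := ((hasSum_pow_mul_mul_rpow hθ0 hlam0 hlam1.le hd.le hqα (A := A₁)).add
    (hasSum_pow_mul_mul_rpow hθ0 hlam0 hlam1.le hd.le hqβ (A := A₂))).add
    ((hasSum_geometric_of_lt_one hθ0 hθ1).mul_right B)
  calc f τ₁ ≤ C₁ * (A₁ * (τ₂ - τ₁) ^ (-α)) + C₂ * (A₂ * (τ₂ - τ₁) ^ (-β)) + C₃ * B :=
      le_of_le_mul_add_of_hasSum_geometric (E := fun r ↦ A₁ * r ^ (-α) + A₂ * r ^ (-β) + B)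
        hθ0 hθ1 hlam0 hlam1 hτ (fun t ht ↦ hM (mem_image_of_mem f ht))
        (fun s t h₁ h₂ h₃ ↦ (hf s t h₁ h₂ h₃).trans_eq (by ring))
        (by simpa only [mul_add] using hsum)
    _ ≤ _ := mul_add_mul_add_mul_le (by positivity) (by positivity) (by positivity)
        (by positivity) (by positivity) hB

/-- Iteration lemma (Lemma 2.1, Giaquinta): given exponents `α, β ≥ 0` and an
absorption factor `θ ∈ [0,1)`, there is a constant `c = c(α, β, θ) > 0` such that
any nonnegative bounded function `f` on `[τ₁, τ₂]` satisfying
`f s ≤ θ * f t + A₁ * (t-s)^(-α) + A₂ * (t-s)^(-β) + B` for all `τ₁ ≤ s < t ≤ τ₂`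
satisfies `f τ₁ ≤ c * (A₁ * (τ₂-τ₁)^(-α) + A₂ * (τ₂-τ₁)^(-β) + B)`. -/
theorem iteration_lemma (α β θ : ℝ) (hα : 0 ≤ α) (hβ : 0 ≤ β)
    (hθ0 : 0 ≤ θ) (hθ1 : θ < 1) :
    ∃ c : ℝ, 0 < c ∧
      ∀ (τ₁ τ₂ : ℝ) (f : ℝ → ℝ) (A₁ A₂ B : ℝ),
        0 ≤ τ₁ → τ₁ < τ₂ →
        (∀ t ∈ Set.Icc τ₁ τ₂, 0 ≤ f t) →
        BddAbove (f '' Set.Icc τ₁ τ₂) →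
        0 ≤ A₁ → 0 ≤ A₂ → 0 ≤ B →
        (∀ s t : ℝ, τ₁ ≤ s → s < t → t ≤ τ₂ →
          f s ≤ θ * f t + A₁ * (t - s) ^ (-α) + A₂ * (t - s) ^ (-β) + B) →
        f τ₁ ≤ c * (A₁ * (τ₂ - τ₁) ^ (-α) + A₂ * (τ₂ - τ₁) ^ (-β) + B) :=
  iteration_lemma_general α β θ hθ0 hθ1
end

section
/- Let (T, μ_t) and (X, μ_x) be measure spaces and μ = μ_t ⊗ μ_x on T × X. For each σ ∈ (0,1] let U_σ = U_σ^t × U_σ^x where U_σ^t ⊆ T and U_σ^x ⊆ X are measurable sets such that U_{σ'}^t ⊆ U_σ^t and U_{σ'}^x ⊆ U_σ^x whenever σ' ≤ σ. Let κ > 1, β₁, β₂ ≥ 1, p̄ ≥ 1, C ≥ 1, δ ∈ (0,1) and a > 0. Suppose f is a μ-measurable function on U₁ such that ‖f‖_{L_{β₁γκ, β₂γκ}(U_{σ'})} ≤ (C·(1+γ)^a/(σ−σ')^a)^{1/γ} · ‖f‖_{L_{β₁γ, β₂γ}(U_σ)} for every δ < σ' < σ ≤ 1 and every γ > 0. Then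 there exists a constant M = M(a, κ, p̄) such that for all p ∈ (0, p̄]: ess sup_{U_δ} |f| ≤ (M·C^{κ/(κ−1)}/(1−δ)^{γ₀})^{1/p} · ‖f‖_{L_{β₁p, β₂p}(U₁)}, where γ₀ = aκ/(κ−1). -/
/-!
Iterate along the radii `σₙ = δ + (1 - δ) / 2ⁿ` with exponents `γₙ = p κⁿ`. Chaining the
reverse Hölder inequality `n` times bounds the `L_{β₁γₙ, β₂γₙ}` norm on `U_{σₙ}` by
`∏_{k<n} (C (1 + γₖ)^a 2^{a(k+1)} / (1 - δ)^a)^{1/γₖ}` times the norm on `U₁`. Each factor is at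
most `(D Eᵏ)^{1/γₖ}` with `D, E` independent of `k`, and `∑ 1/γₖ ≤ θ/p`, `∑ k/γₖ ≤ θ²/p` for
`θ = κ/(κ-1)`, so the product stays below `(M C^θ / (1 - δ)^{aθ})^{1/p}` uniformly in `n`.
Finally, as the exponents tend to infinity, Chebyshev's inequality on a superlevel set of
positive measure shows that these norms on `U_δ ⊆ U_{σₙ}` dominate the essential supremum.
-/

open MeasureTheory ENNReal

/-- Mixed `L_{p,q}` norm (finite exponents `p, q`) of a function on a product
of a time set `At` and a space set `Ax`:
`( ∫_{At} ( ∫_{Ax} |f|^q dμx )^{p/q} dμt )^{1/p}`, valued in `ℝ≥0∞`. -/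
noncomputable def mixedNorm {T X : Type*} [MeasurableSpace T] [MeasurableSpace X]
    (μt : Measure T) (μx : Measure X) (At : Set T) (Ax : Set X)
    (p q : ℝ) (f : T × X → ℝ) : ℝ≥0∞ :=
  (∫⁻ t in At, (∫⁻ x in Ax, ENNReal.ofReal (|f (t, x)| ^ q) ∂μx) ^ (p / q) ∂μt) ^ (1 / p)

open Filter Topology Finset

theorem MeasureTheory.lintegral_rpow_ne_zero {α : Type*} [MeasurableSpace α] {μ : Measure α}
    {g : α → ℝ≥0∞} (hg : ∫⁻ a, g a ∂μ ≠ 0) {r : ℝ} (hr : 0 < r) :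
    ∫⁻ a, g a ^ r ∂μ ≠ 0 := by
  obtain ⟨φ, hφ, hφg, hφ_eq⟩ := exists_measurable_le_lintegral_eq μ g
  intro h0
  refine hg (hφ_eq.trans ((lintegral_eq_zero_iff hφ).2 ?_))
  have hφr : ∫⁻ a, φ a ^ r ∂μ = 0 :=
    nonpos_iff_eq_zero.1 (h0 ▸ lintegral_mono fun a => rpow_le_rpow (hφg a) hr.le)
  filter_upwards [(lintegral_eq_zero_iff (hφ.pow_const r)).1 hφr] with a ha
  simpa [hr, hr.not_gt] using ha

theorem ENNReal.tendsto_rpow_one_div_of_tendsto_atTop {b : ℝ≥0∞} (h0 : b ≠ 0) (htop : b ≠ ⊤)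
    {P : ℕ → ℝ} (hP : Tendsto P atTop atTop) :
    Tendsto (fun n => b ^ (1 / P n)) atTop (𝓝 1) := by
  have hb : 0 < b.toReal := toReal_pos h0 htop
  have hexp : Tendsto (fun n => 1 / P n) atTop (𝓝 0) :=
    (tendsto_inv_atTop_zero.comp hP).congr fun n => (one_div _).symm
  have hreal : Tendsto (fun n => b.toReal ^ (1 / P n)) atTop (𝓝 1) := by
    simpa [Function.comp_def] using (Real.continuousAt_const_rpow hb.ne').tendsto.comp hexp
  simpa [← ofReal_rpow_of_pos hb, ofReal_toReal htop] using ENNReal.tendsto_ofReal hreal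

theorem ENNReal.le_prod_range_mul_of_succ_le_mul {N c : ℕ → ℝ≥0∞}
    (h : ∀ n, N (n + 1) ≤ c n * N n) (n : ℕ) : N n ≤ (∏ k ∈ range n, c k) * N 0 := by
  induction n with
  | zero => simp
  | succ n ih =>
    calc N (n + 1) ≤ c n * N n := h n
      _ ≤ c n * ((∏ k ∈ range n, c k) * N 0) := by gcongr
      _ = (∏ k ∈ range (n + 1), c k) * N 0 := by rw [prod_range_succ, mul_comm _ (c n), mul_assoc]

section MixedNorm

variable {T X : Type*} [MeasurableSpace T] [MeasurableSpace X] (μt : Measure T) (μx : Measure X)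
  {At : Set T} {Ax : Set X} {f : T × X → ℝ}

theorem mixedNorm_mono_set {At' : Set T} {Ax' : Set X} (hAt : At ⊆ At') (hAx : Ax ⊆ Ax')
    {p q : ℝ} (hp : 0 ≤ p) (hpq : 0 ≤ p / q) :
    mixedNorm μt μx At Ax p q f ≤ mixedNorm μt μx At' Ax' p q f := by
  refine rpow_le_rpow ((lintegral_mono fun t => ?_).trans (lintegral_mono_set hAt)) (by positivity)
  exact rpow_le_rpow (lintegral_mono_set hAx) hpq

theorem ofReal_mul_le_mixedNorm (hf : Measurable f) {c p q : ℝ} (hc : 0 ≤ c) (hp : 0 < p)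
    (hq : 0 < q) :
    ENNReal.ofReal c * (∫⁻ t in At, μx {x | x ∈ Ax ∧ c < |f (t, x)|} ^ (p / q) ∂μt) ^ (1 / p) ≤
      mixedNorm μt μx At Ax p q f := by
  have hinner : ∀ t, ENNReal.ofReal (c ^ q) * μx {x | x ∈ Ax ∧ c < |f (t, x)|} ≤
      ∫⁻ x in Ax, ENNReal.ofReal (|f (t, x)| ^ q) ∂μx := fun t =>
    calc ENNReal.ofReal (c ^ q) * μx {x | x ∈ Ax ∧ c < |f (t, x)|}
        = ∫⁻ _ in {x | x ∈ Ax ∧ c < |f (t, x)|}, ENNReal.ofReal (c ^ q) ∂μx :=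
          (setLIntegral_const _ _).symm
      _ ≤ ∫⁻ x in {x | x ∈ Ax ∧ c < |f (t, x)|}, ENNReal.ofReal (|f (t, x)| ^ q) ∂μx :=
          setLIntegral_mono (by fun_prop) fun x hx =>
            ofReal_le_ofReal (Real.rpow_le_rpow hc hx.2.le hq.le)
      _ ≤ ∫⁻ x in Ax, ENNReal.ofReal (|f (t, x)| ^ q) ∂μx :=
          lintegral_mono_set fun x hx => hx.1
  have hpow : ENNReal.ofReal (c ^ q) ^ (p / q) = ENNReal.ofReal c ^ p := by
    rw [ofReal_rpow_of_nonneg (by positivity) (by positivity), ← Real.rpow_mul hc,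
      mul_div_cancel₀ _ hq.ne', ofReal_rpow_of_nonneg hc hp.le]
  calc ENNReal.ofReal c * (∫⁻ t in At, μx {x | x ∈ Ax ∧ c < |f (t, x)|} ^ (p / q) ∂μt) ^ (1 / p)
      = (∫⁻ t in At, (ENNReal.ofReal (c ^ q) * μx {x | x ∈ Ax ∧ c < |f (t, x)|}) ^ (p / q) ∂μt)
          ^ (1 / p) := by
        simp_rw [mul_rpow_of_nonneg _ _ (div_pos hp hq).le, hpow]
        rw [lintegral_const_mul' _ _ (rpow_ne_top_of_nonneg hp.le ofReal_ne_top),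
          mul_rpow_of_nonneg _ _ (by positivity), ← rpow_mul, mul_one_div_cancel hp.ne', rpow_one]
    _ ≤ mixedNorm μt μx At Ax p q f :=
        rpow_le_rpow (lintegral_mono fun t => rpow_le_rpow (hinner t) (div_pos hp hq).le)
          (by positivity)

end MixedNorm

section EssSup

variable {T X : Type*} [MeasurableSpace T] [MeasurableSpace X] {μt : Measure T} {μx : Measure X}
  {At : Set T} {Ax : Set X} {f : T × X → ℝ}

-- `μx` is not assumed s-finite, so only `Measure.prod_apply_le` is available and the slice
-- measures need not be measurable; `lintegral_rpow_ne_zero` is stated without measurability.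
theorem setLIntegral_measure_superlevel_ne_zero (hAt : MeasurableSet At) (hAx : MeasurableSet Ax)
    (hf : Measurable f) {c : ℝ}
    (hc : ENNReal.ofReal c <
      essSup (fun z => ENNReal.ofReal |f z|) ((μt.prod μx).restrict (At ×ˢ Ax))) :
    ∫⁻ t in At, μx {x | x ∈ Ax ∧ c < |f (t, x)|} ∂μt ≠ 0 := by
  set S := At ×ˢ Ax ∩ {z | c < |f z|}
  have hS : MeasurableSet S := (hAt.prod hAx).inter (measurableSet_lt measurable_const hf.abs)
  have hS0 : μt.prod μx S ≠ 0 := by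
    intro h0
    refine hc.not_ge (essSup_le_of_ae_le _ ?_)
    refine (ae_restrict_iff' (hAt.prod hAx)).2 ?_
    filter_upwards [measure_eq_zero_iff_ae_notMem.1 h0] with z hzS hzU
    exact ofReal_le_ofReal (not_lt.1 fun h => hzS ⟨hzU, h⟩)
  have hslice : ∀ t, μx (Prod.mk t ⁻¹' S) =
      At.indicator (fun t => μx {x | x ∈ Ax ∧ c < |f (t, x)|}) t := by
    intro t
    by_cases ht : t ∈ At <;> simp [S, ht, Set.preimage, Set.indicator]
  intro h0
  refine hS0 (nonpos_iff_eq_zero.1 ((Measure.prod_apply_le hS).trans_eq ?_))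
  rw [lintegral_congr hslice, lintegral_indicator hAt, h0]

theorem essSup_le_of_mixedNorm_le (hAt : MeasurableSet At) (hAx : MeasurableSet Ax)
    (hf : Measurable f) {r₁ r₂ : ℝ} (hr₁ : 0 < r₁) (hr₂ : 0 < r₂) {P : ℕ → ℝ}
    (hP : Tendsto P atTop atTop) {B : ℝ≥0∞}
    (hB : ∀ n, mixedNorm μt μx At Ax (r₁ * P n) (r₂ * P n) f ≤ B) :
    essSup (fun z => ENNReal.ofReal |f z|) ((μt.prod μx).restrict (At ×ˢ Ax)) ≤ B := by
  refine le_of_forall_lt fun b hb => ?_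
  obtain ⟨c, hbc, hc⟩ := exists_between hb
  have hc_top : c ≠ ⊤ := hc.ne_top
  set I := ∫⁻ t in At, μx {x | x ∈ Ax ∧ c.toReal < |f (t, x)|} ^ (r₁ / r₂) ∂μt
  have hI : I ≠ 0 := lintegral_rpow_ne_zero
    (setLIntegral_measure_superlevel_ne_zero hAt hAx hf (by rwa [ofReal_toReal hc_top]))
    (div_pos hr₁ hr₂)
  have hlow : ∀ᶠ n in atTop, c * I ^ (1 / (r₁ * P n)) ≤ B := by
    filter_upwards [hP.eventually_gt_atTop 0] with n hn
    have := ofReal_mul_le_mixedNorm μt μx (At := At) (Ax := Ax) hf (toReal_nonneg (a := c))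
      (mul_pos hr₁ hn) (mul_pos hr₂ hn)
    rw [mul_div_mul_right _ _ hn.ne', ofReal_toReal hc_top] at this
    exact this.trans (hB n)
  refine hbc.trans_le ?_
  by_cases hI_top : I = ⊤
  · obtain ⟨n, hn, hPn⟩ := (hlow.and (hP.eventually_gt_atTop 0)).exists
    rw [hI_top, top_rpow_of_pos (by positivity), mul_top (hbc.trans_le' bot_le).ne'] at hn
    exact le_top.trans hn
  · have hlim := ENNReal.Tendsto.const_mul
      (tendsto_rpow_one_div_of_tendsto_atTop hI hI_top (hP.const_mul_atTop hr₁)) (Or.inr hc_top)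
    rw [mul_one] at hlim
    exact le_of_tendsto hlim hlow

end EssSup

section Iteration

variable {r : ℝ}

theorem sum_geometric_range_le (hr0 : 0 ≤ r) (hr1 : r < 1) (n : ℕ) :
    ∑ k ∈ range n, r ^ k ≤ 1 / (1 - r) := by
  have := geom_sum_Ico_le_of_lt_one (m := 0) (n := n) hr0 hr1
  rwa [← range_eq_Ico, pow_zero] at this

theorem sum_coe_mul_geometric_range_le (hr0 : 0 ≤ r) (hr1 : r < 1) (n : ℕ) :
    ∑ k ∈ range n, (k : ℝ) * r ^ k ≤ 1 / (1 - r) ^ 2 := by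
  have hr : ‖r‖ < 1 := by rwa [Real.norm_of_nonneg hr0]
  calc ∑ k ∈ range n, (k : ℝ) * r ^ k
      ≤ ∑' k : ℕ, (k : ℝ) * r ^ k :=
        (hasSum_coe_mul_geometric_of_norm_lt_one hr).summable.sum_le_tsum _
          fun k _ => by positivity
    _ = r / (1 - r) ^ 2 := tsum_coe_mul_geometric_of_norm_lt_one hr
    _ ≤ 1 / (1 - r) ^ 2 := by gcongr

theorem prod_rpow_geometric_le {D E γ : ℝ} (hD : 1 ≤ D) (hE : 1 ≤ E) (hr0 : 0 ≤ r) (hr1 : r < 1)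
    (hγ : 0 < γ) (n : ℕ) :
    ∏ k ∈ range n, (D * E ^ k) ^ (r ^ k / γ) ≤
      (D ^ (1 / (1 - r)) * E ^ (1 / (1 - r) ^ 2)) ^ (1 / γ) := by
  have hD0 : 0 < D := by linarith
  have hE0 : 0 < E := by linarith
  calc ∏ k ∈ range n, (D * E ^ k) ^ (r ^ k / γ)
      = D ^ ((∑ k ∈ range n, r ^ k) / γ) * E ^ ((∑ k ∈ range n, (k : ℝ) * r ^ k) / γ) := by
        rw [sum_div, sum_div, Real.rpow_sum_of_pos hD0, Real.rpow_sum_of_pos hE0,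
          ← prod_mul_distrib]
        refine prod_congr rfl fun k _ => ?_
        rw [Real.mul_rpow hD0.le (by positivity), ← Real.rpow_natCast E k, ← Real.rpow_mul hE0.le,
          mul_div_assoc]
    _ ≤ D ^ (1 / (1 - r) / γ) * E ^ (1 / (1 - r) ^ 2 / γ) := by
        gcongr
        · exact sum_geometric_range_le hr0 hr1 n
        · exact sum_coe_mul_geometric_range_le hr0 hr1 n
    _ = (D ^ (1 / (1 - r)) * E ^ (1 / (1 - r) ^ 2)) ^ (1 / γ) := by
        rw [Real.mul_rpow (by positivity) (by positivity), ← Real.rpow_mul hD0.le,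
          ← Real.rpow_mul hE0.le, mul_one_div, mul_one_div]

end Iteration

section Moser

noncomputable def moserRadius (δ : ℝ) (n : ℕ) : ℝ := δ + (1 - δ) / 2 ^ n

theorem moserRadius_zero (δ : ℝ) : moserRadius δ 0 = 1 := by simp [moserRadius]

theorem moserRadius_sub_succ (δ : ℝ) (n : ℕ) :
    moserRadius δ n - moserRadius δ (n + 1) = (1 - δ) / 2 ^ (n + 1) := by
  simp only [moserRadius, pow_succ]; ring

theorem moserRadius_mem_Ioc {δ : ℝ} (hδ : δ < 1) (n : ℕ) : moserRadius δ n ∈ Set.Ioc δ 1 := by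
  have h1δ : 0 < 1 - δ := by linarith
  refine ⟨lt_add_of_pos_right _ (by positivity), ?_⟩
  have : (1 - δ) / 2 ^ n ≤ 1 - δ := div_le_self h1δ.le (one_le_pow₀ one_le_two)
  simp only [moserRadius]; linarith

noncomputable def moserConst (a κ pbar : ℝ) : ℝ :=
  (2 * (1 + pbar)) ^ (a * (κ / (κ - 1))) * (2 * κ) ^ (a * (κ / (κ - 1)) ^ 2)

variable {a κ p pbar C δ : ℝ}

theorem moser_coeff_le (ha : 0 ≤ a) (hκ : 1 ≤ κ) (hp : 0 ≤ p) (hp_le : p ≤ pbar) (hC : 0 ≤ C)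
    (hδ : δ < 1) (k : ℕ) :
    C * (1 + p * κ ^ k) ^ a / ((1 - δ) / 2 ^ (k + 1)) ^ a ≤
      C * (2 * (1 + pbar) / (1 - δ)) ^ a * ((2 * κ) ^ a) ^ k := by
  have h1δ : 0 < 1 - δ := by linarith
  have hκk : 1 ≤ κ ^ k := one_le_pow₀ hκ
  have hpbar : 0 ≤ pbar := hp.trans hp_le
  have hbase : 1 + p * κ ^ k ≤ (1 + pbar) * κ ^ k := by nlinarith
  rw [mul_div_assoc, ← Real.div_rpow (by positivity) (by positivity), mul_assoc,
    Real.rpow_pow_comm (by positivity), ← Real.mul_rpow (by positivity) (by positivity)]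
  refine mul_le_mul_of_nonneg_left (Real.rpow_le_rpow (by positivity) ?_ ha) hC
  calc (1 + p * κ ^ k) / ((1 - δ) / 2 ^ (k + 1))
      = (1 + p * κ ^ k) * 2 ^ (k + 1) / (1 - δ) := div_div_eq_mul_div _ _ _
    _ ≤ (1 + pbar) * κ ^ k * 2 ^ (k + 1) / (1 - δ) := by gcongr
    _ = 2 * (1 + pbar) / (1 - δ) * (2 * κ) ^ k := by rw [mul_pow, pow_succ]; ring

theorem prod_moser_coeff_le (ha : 0 ≤ a) (hκ : 1 < κ) (hp : 0 < p) (hp_le : p ≤ pbar)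
    (hC : 1 ≤ C) (hδ0 : 0 ≤ δ) (hδ1 : δ < 1) (n : ℕ) :
    ∏ k ∈ range n, (C * (1 + p * κ ^ k) ^ a / ((1 - δ) / 2 ^ (k + 1)) ^ a) ^ (1 / (p * κ ^ k)) ≤
      (moserConst a κ pbar * C ^ (κ / (κ - 1)) / (1 - δ) ^ (a * κ / (κ - 1))) ^ (1 / p) := by
  have h1δ : 0 < 1 - δ := by linarith
  have hpbar : 0 < pbar := hp.trans_le hp_le
  set D := C * (2 * (1 + pbar) / (1 - δ)) ^ a
  set E := (2 * κ) ^ a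
  have hD : 1 ≤ D := one_le_mul_of_one_le_of_one_le hC
    (Real.one_le_rpow ((one_le_div h1δ).2 (by linarith)) ha)
  have hE : 1 ≤ E := Real.one_le_rpow (by linarith) ha
  have hθ : 1 / (1 - κ⁻¹) = κ / (κ - 1) := by field_simp
  calc ∏ k ∈ range n, (C * (1 + p * κ ^ k) ^ a / ((1 - δ) / 2 ^ (k + 1)) ^ a) ^ (1 / (p * κ ^ k))
      ≤ ∏ k ∈ range n, (D * E ^ k) ^ (κ⁻¹ ^ k / p) := by
        refine prod_le_prod (fun k _ => by positivity) fun k _ => ?_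
        rw [show 1 / (p * κ ^ k) = κ⁻¹ ^ k / p by
          rw [inv_pow, one_div, mul_inv, div_eq_mul_inv, mul_comm]]
        exact Real.rpow_le_rpow (by positivity)
          (moser_coeff_le ha hκ.le hp.le hp_le (by linarith) hδ1 k) (by positivity)
    _ ≤ (D ^ (1 / (1 - κ⁻¹)) * E ^ (1 / (1 - κ⁻¹) ^ 2)) ^ (1 / p) :=
        prod_rpow_geometric_le hD hE (by positivity) (inv_lt_one_of_one_lt₀ hκ) hp n
    _ = (moserConst a κ pbar * C ^ (κ / (κ - 1)) / (1 - δ) ^ (a * κ / (κ - 1))) ^ (1 / p) := by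
        rw [← one_div_pow, hθ, moserConst, mul_div_assoc a]
        congr 1
        rw [Real.mul_rpow (by positivity) (by positivity), Real.div_rpow (by positivity) h1δ.le,
          ← Real.rpow_mul (by positivity), Real.div_rpow (by positivity) (by positivity),
          ← Real.rpow_mul (by positivity), ← Real.rpow_mul h1δ.le]
        ring

end Moser

/-- Abstract Moser iteration lemma (Lemma 2.2): if the mixed norms of `f` on a
nested family of product sets `U_σ = U_σ^t × U_σ^x` satisfy the reverse Hölder
type iteration inequality with exponent gain `κ > 1`, then the essential
supremum of `|f|` on `U_δ` is controlled by any `L_{β₁ p, β₂ p}` norm on `U₁`,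
with a constant `M = M(a, κ, p̄)`. -/
theorem moser_iteration (a κ pbar : ℝ) (ha : 0 < a) (hκ : 1 < κ) (hpbar : 1 ≤ pbar) :
    ∃ M : ℝ, 0 < M ∧
      ∀ (T X : Type) [MeasurableSpace T] [MeasurableSpace X]
        (μt : Measure T) (μx : Measure X)
        (Ut : ℝ → Set T) (Ux : ℝ → Set X)
        (β₁ β₂ C δ : ℝ) (f : T × X → ℝ),
        (∀ σ ∈ Set.Ioc (0:ℝ) 1, MeasurableSet (Ut σ)) →
        (∀ σ ∈ Set.Ioc (0:ℝ) 1, MeasurableSet (Ux σ)) →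
        (∀ σ' σ : ℝ, 0 < σ' → σ' ≤ σ → σ ≤ 1 → Ut σ' ⊆ Ut σ) →
        (∀ σ' σ : ℝ, 0 < σ' → σ' ≤ σ → σ ≤ 1 → Ux σ' ⊆ Ux σ) →
        1 ≤ β₁ → 1 ≤ β₂ → 1 ≤ C → δ ∈ Set.Ioo (0:ℝ) 1 →
        Measurable f →
        (∀ σ' σ γ : ℝ, δ < σ' → σ' < σ → σ ≤ 1 → 0 < γ →
          mixedNorm μt μx (Ut σ') (Ux σ') (β₁ * γ * κ) (β₂ * γ * κ) f ≤
            ENNReal.ofReal ((C * (1 + γ) ^ a / (σ - σ') ^ a) ^ (1 / γ)) *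
              mixedNorm μt μx (Ut σ) (Ux σ) (β₁ * γ) (β₂ * γ) f) →
        ∀ p : ℝ, 0 < p → p ≤ pbar →
          essSup (fun z => ENNReal.ofReal |f z|)
              ((μt.prod μx).restrict (Ut δ ×ˢ Ux δ)) ≤
            ENNReal.ofReal
                ((M * C ^ (κ / (κ - 1)) / (1 - δ) ^ (a * κ / (κ - 1))) ^ (1 / p)) *
              mixedNorm μt μx (Ut 1) (Ux 1) (β₁ * p) (β₂ * p) f := by
  refine ⟨moserConst a κ pbar, mul_pos (Real.rpow_pos_of_pos (by linarith) _)
    (Real.rpow_pos_of_pos (by linarith) _), ?_⟩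
  intro T X _ _ μt μx Ut Ux β₁ β₂ C δ f hUt hUx hUt_mono hUx_mono hβ₁ hβ₂ hC ⟨hδ0, hδ1⟩ hf hiter
    p hp hp_le
  set σ := moserRadius δ
  set N : ℕ → ℝ≥0∞ := fun n =>
    mixedNorm μt μx (Ut (σ n)) (Ux (σ n)) (β₁ * (p * κ ^ n)) (β₂ * (p * κ ^ n)) f
  have hstep : ∀ n, N (n + 1) ≤ ENNReal.ofReal
      ((C * (1 + p * κ ^ n) ^ a / ((1 - δ) / 2 ^ (n + 1)) ^ a) ^ (1 / (p * κ ^ n))) * N n := by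
    intro n
    have h := hiter (σ (n + 1)) (σ n) (p * κ ^ n) (moserRadius_mem_Ioc hδ1 (n + 1)).1
      (sub_pos.1 (moserRadius_sub_succ δ n ▸ by positivity)) (moserRadius_mem_Ioc hδ1 n).2
      (by positivity)
    rwa [moserRadius_sub_succ, mul_assoc β₁, mul_assoc β₂, mul_assoc p, ← pow_succ] at h
  have hN : ∀ n, N n ≤
      ENNReal.ofReal ((moserConst a κ pbar * C ^ (κ / (κ - 1)) / (1 - δ) ^ (a * κ / (κ - 1)))
        ^ (1 / p)) * N 0 := by
    intro n
    refine (ENNReal.le_prod_range_mul_of_succ_le_mul hstep n).trans (mul_le_mul_left ?_ _)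
    rw [← ofReal_prod_of_nonneg fun k _ => by positivity]
    exact ofReal_le_ofReal (prod_moser_coeff_le ha.le hκ hp hp_le hC hδ0.le hδ1 n)
  have hN0 : N 0 = mixedNorm μt μx (Ut 1) (Ux 1) (β₁ * p) (β₂ * p) f := by
    simp [N, σ, moserRadius_zero]
  rw [← hN0]
  refine essSup_le_of_mixedNorm_le (hUt δ ⟨hδ0, hδ1.le⟩) (hUx δ ⟨hδ0, hδ1.le⟩) hf
    (by linarith) (by linarith) ((tendsto_pow_atTop_atTop_of_one_lt hκ).const_mul_atTop hp)
    fun n => (mixedNorm_mono_set μt μx ?_ ?_ (by positivity) (by positivity)).trans (hN n)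
  · exact hUt_mono δ (σ n) hδ0 (moserRadius_mem_Ioc hδ1 n).1.le (moserRadius_mem_Ioc hδ1 n).2
  · exact hUx_mono δ (σ n) hδ0 (moserRadius_mem_Ioc hδ1 n).1.le (moserRadius_mem_Ioc hδ1 n).2
end

section
/- Let T > 0 and let l ∈ L₁((0,T)) ∩ C¹((0,T)) be nonnegative and nonincreasing. Let φ ∈ C¹([0,T]) and let v : [0,T] → ℝ be given by v(t) = ∫₀^t v̇(σ) dσ for some v̇ ∈ L₁((0,T)) (so v is absolutely continuous with v(0) = 0). Then for almost every t ∈ (0,T): ∫₀^t l(t−σ)·φ(σ)·v̇(σ) dσ = φ(t)·∫₀^t l(t−σ)·v̇(σ) dσ + ∫₀^t v(σ)·[ −l'(t−σ)·(φ(t)−φ(σ)) − l(t−σ)·φ̇(σ) ] dσ, where l' denotes the derivative of l. -/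
/-!
Put `g σ = l (t - σ) * (φ t - φ σ)`. The difference of the two convolutions is `-∫₀ᵗ v̇ g`, and
integration by parts against the absolutely continuous `v` turns it into `∫₀ᵗ v g'`; the boundary
terms vanish because `v 0 = 0` and `g t = 0`. The work is to see that `g` is absolutely continuous
up to `σ = t` although `l` may blow up at `0`. Monotonicity gives `u l(u) ≤ ∫₀ᵘ l → 0`, and with
`(u l)' = l + u l'` and `l' ≤ 0` also the integrability of `u l'(u)`, which dominates `g'` since `φ`
is Lipschitz. This works at every `t` where the convolution `l * v̇` exists, i.e. almost everywhere.
-/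

open MeasureTheory Set intervalIntegral Filter Topology

lemma AntitoneOn.mul_le_intervalIntegral {l : ℝ → ℝ} {u : ℝ} (hu : 0 < u)
    (hl : AntitoneOn l (Ioc 0 u)) (hint : IntervalIntegrable l volume 0 u) :
    u * l u ≤ ∫ x in 0..u, l x :=
  calc u * l u = ∫ _ in 0..u, l u := by simp
    _ ≤ ∫ x in 0..u, l x :=
      integral_mono_on_of_le_Ioo hu.le intervalIntegrable_const hint
        fun x hx => hl ⟨hx.1, hx.2.le⟩ (right_mem_Ioc.2 hu) hx.2.le

lemma AntitoneOn.tendsto_mul_nhdsGT_zero {l : ℝ → ℝ} {c : ℝ} (hc : 0 < c)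
    (hl : AntitoneOn l (Ioc 0 c)) (hl0 : ∀ u ∈ Ioc 0 c, 0 ≤ l u)
    (hint : IntegrableOn l (Ioc 0 c)) :
    Tendsto (fun u => u * l u) (𝓝[>] 0) (𝓝 0) := by
  have hprim : Tendsto (fun u => ∫ x in 0..u, l x) (𝓝[>] 0) (𝓝 0) := by
    have h := continuousOn_primitive_interval (a := 0) (b := c) (μ := volume) (f := l)
      (by rwa [uIcc_of_le hc.le, integrableOn_Icc_iff_integrableOn_Ioc])
    rw [uIcc_of_le hc.le] at h
    simpa [← nhdsWithin_Ioc_eq_nhdsGT hc] using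
      (h 0 (left_mem_Icc.2 hc.le)).mono_left (nhdsWithin_mono _ Ioc_subset_Icc_self)
  refine squeeze_zero' ?_ ?_ hprim
  · filter_upwards [Ioc_mem_nhdsGT hc] with u hu using mul_nonneg hu.1.le (hl0 u hu)
  · filter_upwards [Ioc_mem_nhdsGT hc] with u hu
    exact (hl.mono (Ioc_subset_Ioc_right hu.2)).mul_le_intervalIntegral hu.1
      ((intervalIntegrable_iff_integrableOn_Ioc_of_le hu.1.le).2
        (hint.mono_set (Ioc_subset_Ioc_right hu.2)))

lemma AntitoneOn.integrableOn_mul_deriv {l l' : ℝ → ℝ} {c : ℝ}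
    (hl : AntitoneOn l (Ioc 0 c)) (hl0 : ∀ u ∈ Ioc 0 c, 0 ≤ l u)
    (hint : IntegrableOn l (Ioc 0 c)) (hderiv : ∀ u ∈ Ioc 0 c, HasDerivAt l (l' u) u)
    (hl' : ContinuousOn l' (Ioc 0 c)) :
    IntegrableOn (fun u => u * l' u) (Ioc 0 c) := by
  rcases le_or_gt c 0 with hc | hc
  · simp [Ioc_eq_empty_of_le hc]
  have hl'_nonpos : ∀ u ∈ Ioc 0 c, l' u ≤ 0 := fun u hu =>
    (hderiv u hu).hasDerivWithinAt.nonpos_of_antitoneOn (uniqueDiffOn_Ioc 0 c u hu).accPt hl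
  have hint' : ∀ ε ∈ Ioc 0 c, IntervalIntegrable l volume 0 ε := fun ε hε =>
    (intervalIntegrable_iff_integrableOn_Ioc_of_le hε.1.le).2
      (hint.mono_set (Ioc_subset_Ioc_right hε.2))
  have hsub : ∀ n : ℕ, Icc (c / (n + 1)) c ⊆ Ioc 0 c := fun n x hx =>
    ⟨(div_pos hc n.cast_add_one_pos).trans_le hx.1, hx.2⟩
  refine integrableOn_Ioc_of_intervalIntegral_norm_bounded_left (I := ∫ x in 0..c, l x)
    (a := fun n : ℕ => c / (n + 1)) (l := atTop)
    (fun n => ((continuousOn_id.mul (hl'.mono (hsub n))).integrableOn_Icc).mono_set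
      Ioc_subset_Icc_self) ?_ (Eventually.of_forall fun n => ?_)
  · simpa [div_eq_mul_one_div c] using tendsto_one_div_add_atTop_nhds_zero_nat.const_mul c
  set ε := c / (n + 1)
  have hε : ε ∈ Ioc 0 c := hsub n ⟨le_rfl, div_le_self hc.le (by simp)⟩
  have hul' : IntervalIntegrable (fun u => u * l' u) volume ε c :=
    (continuousOn_id.mul (hl'.mono (uIcc_of_le hε.2 ▸ hsub n))).intervalIntegrable
  have hl_εc : IntervalIntegrable l volume ε c := (hint' ε hε).symm.trans (hint' c ⟨hc, le_rfl⟩)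
  have hftc : ∫ u in ε..c, (l u + u * l' u) = c * l c - ε * l ε := by
    refine integral_eq_sub_of_hasDerivAt (f := fun u => u * l u) (fun u hu => ?_) (hl_εc.add hul')
    have hu' : u ∈ Ioc 0 c := hsub n (uIcc_of_le hε.2 ▸ hu)
    simpa using (hasDerivAt_id' u).fun_mul (hderiv u hu')
  have hnorm : ∫ u in Ioc ε c, ‖u * l' u‖ = -∫ u in ε..c, u * l' u := by
    rw [integral_of_le hε.2, ← MeasureTheory.integral_neg]
    refine setIntegral_congr_fun measurableSet_Ioc fun u hu => ?_
    have hu' : u ∈ Ioc 0 c := hsub n ⟨hu.1.le, hu.2⟩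
    exact Real.norm_of_nonpos (mul_nonpos_of_nonneg_of_nonpos hu'.1.le (hl'_nonpos u hu'))
  have hsplit := integral_add_adjacent_intervals (hint' ε hε) hl_εc
  rw [integral_add hl_εc hul'] at hftc
  have hεl := (hl.mono (Ioc_subset_Ioc_right hε.2)).mul_le_intervalIntegral hε.1 (hint' ε hε)
  have hcl := mul_nonneg hc.le (hl0 c ⟨hc, le_rfl⟩)
  rw [hnorm]
  linarith

theorem integral_primitive_mul_deriv_eq {f g g' : ℝ → ℝ} {a b : ℝ} (hab : a ≤ b)
    (hf : IntervalIntegrable f volume a b) (hg : ContinuousOn g (Icc a b))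
    (hg' : ∀ x ∈ Ioo a b, HasDerivAt g (g' x) x) (hg'_int : IntervalIntegrable g' volume a b) :
    ∫ x in a..b, (∫ y in a..x, f y) * g' x =
      (∫ x in a..b, f x) * g b - ∫ x in a..b, f x * g x := by
  set F := fun x => ∫ y in a..x, f y
  -- `G` stands in for `g`: it equals `g - g b` on `[a, b]` and is absolutely continuous
  set G := fun x => ∫ y in b..x, g' y
  have hF : AbsolutelyContinuousOnInterval F a b :=
    hf.absolutelyContinuousOnInterval_intervalIntegral left_mem_uIcc
  have hG : AbsolutelyContinuousOnInterval G a b :=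
    hg'_int.absolutelyContinuousOnInterval_intervalIntegral right_mem_uIcc
  have hdF : ∀ᵐ x, x ∈ uIoc a b → deriv F x = f x := by
    filter_upwards [hf.ae_hasDerivAt_integral] with x hx hmem
    exact (hx (uIoc_subset_uIcc hmem) a left_mem_uIcc).deriv
  have hdG : ∀ᵐ x, x ∈ uIoc a b → g' x = deriv G x := by
    filter_upwards [hg'_int.ae_hasDerivAt_integral] with x hx hmem
    exact (hx (uIoc_subset_uIcc hmem) b right_mem_uIcc).deriv.symm
  have hG_eq : ∀ x ∈ uIoc a b, G x = g x - g b := by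
    intro x hx
    rw [uIoc_of_le hab] at hx
    have hxb : IntervalIntegrable g' volume x b :=
      hg'_int.mono_set (by rw [uIcc_of_le hab, uIcc_of_le hx.2]; exact Icc_subset_Icc_left hx.1.le)
    rw [show G x = -∫ y in x..b, g' y from integral_symm _ _,
      integral_eq_sub_of_hasDerivAt_of_le hx.2
      (hg.mono (Icc_subset_Icc_left hx.1.le))
      (fun y hy => hg' y ⟨hx.1.trans hy.1, hy.2⟩) hxb]
    ring
  have hfg : IntervalIntegrable (fun x => f x * g x) volume a b :=
    hf.mul_continuousOn (by rwa [uIcc_of_le hab])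
  calc ∫ x in a..b, F x * g' x = ∫ x in a..b, F x * deriv G x :=
        intervalIntegral.integral_congr_ae
          (by filter_upwards [hdG] with x hx hmem using by rw [hx hmem])
    _ = F b * G b - F a * G a - ∫ x in a..b, deriv F x * G x :=
        hF.integral_mul_deriv_eq_deriv_mul hG
    _ = -∫ x in a..b, (f x * g x - f x * g b) := by
        rw [intervalIntegral.integral_congr_ae (g := fun x => f x * g x - f x * g b)
          (by filter_upwards [hdF] with x hx hmem using by rw [hx hmem, hG_eq x hmem]; ring)]
        simp [F, G]
    _ = (∫ x in a..b, f x) * g b - ∫ x in a..b, f x * g x := by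
        rw [integral_sub hfg (hf.mul_const _), intervalIntegral.integral_mul_const]
        ring

lemma exists_lipschitzOnWith_of_hasDerivWithinAt {φ φ' : ℝ → ℝ} {s : Set ℝ}
    (hs : Convex ℝ s) (hs' : IsCompact s) (hφ : ∀ x ∈ s, HasDerivWithinAt φ (φ' x) s x)
    (hφ' : ContinuousOn φ' s) : ∃ K, LipschitzOnWith K φ s := by
  obtain ⟨C, hC⟩ := hs'.exists_bound_of_continuousOn hφ'
  exact ⟨C.toNNReal, hs.lipschitzOnWith_of_nnnorm_hasDerivWithin_le hφ fun x hx =>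
    by simpa [← NNReal.coe_le_coe] using (hC x hx).trans (le_max_left C 0)⟩

section

variable {t : ℝ} {K : NNReal} {l l' φ φ' : ℝ → ℝ}

lemma tendsto_comp_sub_mul_sub_nhdsLT (ht : 0 < t) (hφ : LipschitzOnWith K φ (Icc 0 t))
    (hl : Tendsto (fun u => u * l u) (𝓝[>] 0) (𝓝 0)) :
    Tendsto (fun σ => l (t - σ) * (φ t - φ σ)) (𝓝[<] t) (𝓝 0) := by
  have hsub : Tendsto (fun σ => t - σ) (𝓝[<] t) (𝓝[>] 0) := by
    refine tendsto_nhdsWithin_iff.2 ⟨?_, ?_⟩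
    · have h : Tendsto (fun σ => t - σ) (𝓝 t) (𝓝 (t - t)) := tendsto_const_nhds.sub tendsto_id
      simpa using h.mono_left nhdsWithin_le_nhds
    · filter_upwards [self_mem_nhdsWithin] with σ hσ using sub_pos.2 (mem_Iio.1 hσ)
  have hbound := (hl.comp hsub).norm.const_mul (K : ℝ)
  rw [norm_zero, mul_zero] at hbound
  refine squeeze_zero_norm' ?_ hbound
  filter_upwards [Ico_mem_nhdsLT ht] with σ hσ
  have hlip := hφ.dist_le_mul t (right_mem_Icc.2 ht.le) σ (Ico_subset_Icc_self hσ)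
  rw [Real.dist_eq, Real.dist_eq, abs_of_pos (sub_pos.2 hσ.2)] at hlip
  calc ‖l (t - σ) * (φ t - φ σ)‖ = ‖l (t - σ)‖ * |φ t - φ σ| := norm_mul _ _
    _ ≤ ‖l (t - σ)‖ * (K * (t - σ)) := by gcongr
    _ = K * ‖(t - σ) * l (t - σ)‖ := by
      rw [norm_mul, Real.norm_of_nonneg (sub_pos.2 hσ.2).le]; ring

lemma continuousOn_comp_sub_mul_sub (ht : 0 < t) (hl : ∀ u ∈ Ioc 0 t, ContinuousAt l u)
    (hφ : LipschitzOnWith K φ (Icc 0 t)) (hlim : Tendsto (fun u => u * l u) (𝓝[>] 0) (𝓝 0)) :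
    ContinuousOn (fun σ => l (t - σ) * (φ t - φ σ)) (Icc 0 t) := by
  intro σ hσ
  rcases hσ.2.eq_or_lt with rfl | hσt
  · -- the value at `t` is `l 0 * (φ t - φ t) = 0`, whatever `l 0` is
    refine (continuousWithinAt_Iio_iff_Iic.1 ?_).mono fun x hx => hx.2
    simpa [ContinuousWithinAt] using tendsto_comp_sub_mul_sub_nhdsLT ht hφ hlim
  · have hl_at : ContinuousAt (fun σ => l (t - σ)) σ :=
      (hl (t - σ) ⟨sub_pos.2 hσt, by linarith [hσ.1]⟩).comp
        (continuousAt_const.sub continuousAt_id)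
    exact hl_at.continuousWithinAt.mul (continuousWithinAt_const.sub (hφ.continuousOn σ hσ))

lemma hasDerivAt_comp_sub_mul_sub {σ : ℝ} (hl : HasDerivAt l (l' (t - σ)) (t - σ))
    (hφ : HasDerivAt φ (φ' σ) σ) :
    HasDerivAt (fun σ => l (t - σ) * (φ t - φ σ))
      (-(l' (t - σ)) * (φ t - φ σ) - l (t - σ) * φ' σ) σ := by
  have hl_comp : HasDerivAt (fun σ => l (t - σ)) (-(l' (t - σ))) σ := by
    simpa using hl.comp_const_sub t σ
  exact (hl_comp.fun_mul (hφ.const_sub (φ t))).congr_deriv (by ring)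

lemma intervalIntegrable_deriv_comp_sub_mul_sub (ht : 0 < t) (hl : IntegrableOn l (Ioc 0 t))
    (hl' : ContinuousOn l' (Ioc 0 t)) (hul' : IntegrableOn (fun u => u * l' u) (Ioc 0 t))
    (hφ : LipschitzOnWith K φ (Icc 0 t)) (hφ' : ContinuousOn φ' (Icc 0 t)) :
    IntervalIntegrable (fun σ => -(l' (t - σ)) * (φ t - φ σ) - l (t - σ) * φ' σ) volume 0 t := by
  have hreflect : ∀ {f : ℝ → ℝ}, IntegrableOn f (Ioc 0 t) →
      IntervalIntegrable (fun σ => f (t - σ)) volume 0 t := fun hf => by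
    simpa using (((intervalIntegrable_iff_integrableOn_Ioc_of_le ht.le).2 hf).comp_sub_left t).symm
  refine IntervalIntegrable.sub ?_ ((hreflect hl).mul_continuousOn (by rwa [uIcc_of_le ht.le]))
  refine ((hreflect hul').norm.const_mul K).mono_fun' ?_ ?_
  · rw [uIoc_of_le ht.le, ← Measure.restrict_congr_set Ioo_ae_eq_Ioc]
    refine ContinuousOn.aestronglyMeasurable ?_ measurableSet_Ioo
    have hmaps : MapsTo (fun σ => t - σ) (Ioo 0 t) (Ioc 0 t) := fun σ hσ =>
      ⟨sub_pos.2 hσ.2, by linarith [hσ.1]⟩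
    exact ((hl'.comp (continuousOn_const.sub continuousOn_id) hmaps).neg).mul
      (continuousOn_const.sub (hφ.continuousOn.mono Ioo_subset_Icc_self))
  · rw [uIoc_of_le ht.le]
    refine ae_restrict_of_forall_mem measurableSet_Ioc fun σ hσ => ?_
    have hlip := hφ.dist_le_mul t (right_mem_Icc.2 ht.le) σ (Ioc_subset_Icc_self hσ)
    rw [Real.dist_eq, Real.dist_eq, abs_of_nonneg (sub_nonneg.2 hσ.2)] at hlip
    calc ‖-(l' (t - σ)) * (φ t - φ σ)‖ = ‖l' (t - σ)‖ * |φ t - φ σ| := by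
          rw [norm_mul, norm_neg, Real.norm_eq_abs (φ t - φ σ)]
      _ ≤ ‖l' (t - σ)‖ * (K * (t - σ)) := by gcongr
      _ = K * ‖(t - σ) * l' (t - σ)‖ := by
        rw [norm_mul, Real.norm_of_nonneg (sub_nonneg.2 hσ.2)]; ring

end

lemma ae_intervalIntegrable_comp_sub_mul {T : ℝ} {k f : ℝ → ℝ} (hk : IntegrableOn k (Ioo 0 T))
    (hf : IntegrableOn f (Ioo 0 T)) :
    ∀ᵐ t, t ∈ Ioo 0 T → IntervalIntegrable (fun σ => k (t - σ) * f σ) volume 0 t := by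
  have hconv := ((integrable_indicator_iff measurableSet_Ioo).2 hf).ae_convolution_exists
    (L := ContinuousLinearMap.mul ℝ ℝ) ((integrable_indicator_iff measurableSet_Ioo).2 hk)
  filter_upwards [hconv] with t ht htT
  rw [intervalIntegrable_iff_integrableOn_Ioo_of_le htT.1.le]
  refine (ht.integrableOn (s := Ioo 0 t)).congr_fun (fun σ hσ => ?_) measurableSet_Ioo
  have hσT : σ ∈ Ioo 0 T := ⟨hσ.1, hσ.2.trans htT.2⟩
  have htσ : t - σ ∈ Ioo 0 T := ⟨sub_pos.2 hσ.2, by linarith [hσ.1, htT.2]⟩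
  simp [indicator_of_mem hσT, indicator_of_mem htσ, mul_comm]

theorem convolution_identity_at {t : ℝ} (ht : 0 < t) {l l' φ φ' vdot v : ℝ → ℝ}
    (hl_int : IntegrableOn l (Ioc 0 t))
    (hl_deriv : ∀ u ∈ Ioc 0 t, HasDerivAt l (l' u) u)
    (hl'_cont : ContinuousOn l' (Ioc 0 t))
    (hl_nonneg : ∀ u ∈ Ioc 0 t, 0 ≤ l u)
    (hl_mono : AntitoneOn l (Ioc 0 t))
    (hφ_deriv : ∀ σ ∈ Icc 0 t, HasDerivWithinAt φ (φ' σ) (Icc 0 t) σ)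
    (hφ'_cont : ContinuousOn φ' (Icc 0 t))
    (hvdot : IntervalIntegrable vdot volume 0 t)
    (hv : ∀ σ ∈ Icc 0 t, v σ = ∫ τ in 0..σ, vdot τ)
    (hconv : IntervalIntegrable (fun σ => l (t - σ) * vdot σ) volume 0 t) :
    (∫ σ in 0..t, l (t - σ) * (φ σ * vdot σ)) =
      φ t * (∫ σ in 0..t, l (t - σ) * vdot σ) +
        ∫ σ in 0..t, v σ * (-(l' (t - σ)) * (φ t - φ σ) - l (t - σ) * φ' σ) := by
  obtain ⟨K, hφ_lip⟩ :=
    exists_lipschitzOnWith_of_hasDerivWithinAt (convex_Icc 0 t) isCompact_Icc hφ_deriv hφ'_cont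
  have hg_cont := continuousOn_comp_sub_mul_sub ht (fun u hu => (hl_deriv u hu).continuousAt)
    hφ_lip (hl_mono.tendsto_mul_nhdsGT_zero ht hl_nonneg hl_int)
  have hg_deriv : ∀ σ ∈ Ioo 0 t, HasDerivAt (fun σ => l (t - σ) * (φ t - φ σ))
      (-(l' (t - σ)) * (φ t - φ σ) - l (t - σ) * φ' σ) σ := fun σ hσ =>
    hasDerivAt_comp_sub_mul_sub (hl_deriv _ ⟨sub_pos.2 hσ.2, by linarith [hσ.1]⟩)
      ((hφ_deriv σ (Ioo_subset_Icc_self hσ)).hasDerivAt (Icc_mem_nhds hσ.1 hσ.2))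
  have hg'_int := intervalIntegrable_deriv_comp_sub_mul_sub ht hl_int hl'_cont
    (hl_mono.integrableOn_mul_deriv hl_nonneg hl_int hl_deriv hl'_cont) hφ_lip hφ'_cont
  have hparts := integral_primitive_mul_deriv_eq ht.le hvdot hg_cont hg_deriv hg'_int
  simp only [sub_self, mul_zero, zero_sub] at hparts
  have hv_eq : ∫ σ in 0..t, v σ * (-(l' (t - σ)) * (φ t - φ σ) - l (t - σ) * φ' σ) =
      ∫ σ in 0..t, (∫ τ in 0..σ, vdot τ) * (-(l' (t - σ)) * (φ t - φ σ) - l (t - σ) * φ' σ) :=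
    integral_congr fun σ hσ => by rw [hv σ (uIcc_of_le ht.le ▸ hσ)]
  have hvg : IntervalIntegrable (fun σ => vdot σ * (l (t - σ) * (φ t - φ σ))) volume 0 t :=
    hvdot.mul_continuousOn (uIcc_of_le ht.le ▸ hg_cont)
  rw [hv_eq, hparts, ← sub_eq_add_neg, ← intervalIntegral.integral_const_mul,
    ← integral_sub (hconv.const_mul _) hvg]
  exact integral_congr fun σ _ => by ring

theorem convolution_identity_general (T : ℝ)
    (l l' φ φ' vdot : ℝ → ℝ) (v : ℝ → ℝ)
    (hl_int : IntegrableOn l (Ioo 0 T))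
    (hl_deriv : ∀ t ∈ Ioo (0:ℝ) T, HasDerivAt l (l' t) t)
    (hl'_cont : ContinuousOn l' (Ioo 0 T))
    (hl_nonneg : ∀ t ∈ Ioo (0:ℝ) T, 0 ≤ l t)
    (hl_mono : AntitoneOn l (Ioo 0 T))
    (hφ_deriv : ∀ t ∈ Icc (0:ℝ) T, HasDerivWithinAt φ (φ' t) (Icc 0 T) t)
    (hφ'_cont : ContinuousOn φ' (Icc 0 T))
    (hvdot : IntegrableOn vdot (Ioo 0 T))
    (hv : ∀ t ∈ Icc (0:ℝ) T, v t = ∫ σ in (0:ℝ)..t, vdot σ) :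
    ∀ᵐ t : ℝ, t ∈ Ioo 0 T →
      (∫ σ in (0:ℝ)..t, l (t - σ) * (φ σ * vdot σ)) =
        φ t * (∫ σ in (0:ℝ)..t, l (t - σ) * vdot σ) +
          ∫ σ in (0:ℝ)..t,
            v σ * (-(l' (t - σ)) * (φ t - φ σ) - l (t - σ) * φ' σ) := by
  filter_upwards [ae_intervalIntegrable_comp_sub_mul hl_int hvdot] with t hconv ht
  have hIoc : Ioc 0 t ⊆ Ioo 0 T := Ioc_subset_Ioo_right ht.2
  have hIcc : Icc 0 t ⊆ Icc 0 T := Icc_subset_Icc_right ht.2.le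
  exact convolution_identity_at ht.1 (hl_int.mono_set hIoc) (fun u hu => hl_deriv u (hIoc hu))
    (hl'_cont.mono hIoc) (fun u hu => hl_nonneg u (hIoc hu)) (hl_mono.mono hIoc)
    (fun σ hσ => (hφ_deriv σ (hIcc hσ)).mono hIcc) (hφ'_cont.mono hIcc)
    ((intervalIntegrable_iff_integrableOn_Ioc_of_le ht.1.le).2 (hvdot.mono_set hIoc))
    (fun σ hσ => hv σ (hIcc hσ)) (hconv ht)

/-- Lemma 2.3, first identity: for `l ∈ L₁((0,T)) ∩ C¹((0,T))` nonnegative and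
nonincreasing, `φ ∈ C¹([0,T])` and `v(t) = ∫₀ᵗ v̇`, for a.e. `t ∈ (0,T)` one has
`(l * (φ v̇))(t) = φ(t) (l * v̇)(t) + ∫₀ᵗ v(σ) ∂_σ( l(t-σ)(φ(t)-φ(σ)) ) dσ`. -/
theorem convolution_identity (T : ℝ) (hT : 0 < T)
    (l l' φ φ' vdot : ℝ → ℝ) (v : ℝ → ℝ)
    (hl_int : IntegrableOn l (Ioo 0 T))
    (hl_deriv : ∀ t ∈ Ioo (0:ℝ) T, HasDerivAt l (l' t) t)
    (hl'_cont : ContinuousOn l' (Ioo 0 T))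
    (hl_nonneg : ∀ t ∈ Ioo (0:ℝ) T, 0 ≤ l t)
    (hl_mono : AntitoneOn l (Ioo 0 T))
    (hφ_deriv : ∀ t ∈ Icc (0:ℝ) T, HasDerivWithinAt φ (φ' t) (Icc 0 T) t)
    (hφ'_cont : ContinuousOn φ' (Icc 0 T))
    (hvdot : IntegrableOn vdot (Ioo 0 T))
    (hv : ∀ t ∈ Icc (0:ℝ) T, v t = ∫ σ in (0:ℝ)..t, vdot σ) :
    ∀ᵐ t : ℝ, t ∈ Ioo 0 T →
      (∫ σ in (0:ℝ)..t, l (t - σ) * (φ σ * vdot σ)) =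
        φ t * (∫ σ in (0:ℝ)..t, l (t - σ) * vdot σ) +
          ∫ σ in (0:ℝ)..t,
            v σ * (-(l' (t - σ)) * (φ t - φ σ) - l (t - σ) * φ' σ) :=
  convolution_identity_general T l l' φ φ' vdot v hl_int hl_deriv hl'_cont hl_nonneg hl_mono
    hφ_deriv hφ'_cont hvdot hv
end

section
/- Let T > 0 and let l ∈ L₁((0,T)) ∩ C¹((0,T)) be nonnegative and nonincreasing. Let φ ∈ C¹([0,T]) be nondecreasing and let v : [0,T] → ℝ be given by v(t) = ∫₀^t v̇(σ) dσ for some v̇ ∈ L₁((0,T)), and assume v(t) ≥ 0 for all t ∈ [0,T]. Then for almost every t ∈ (0,T): ∫₀^t l(t−σ)·φ(σ)·v̇(σ) dσ ≥ φ(t)·∫₀^t l(t−σ)·v̇(σ) dσ − ∫₀^t l(t−σ)·φ̇(σ)·v(σ) dσ. -/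
open MeasureTheory Set intervalIntegral Topology Filter

/-!
Fix `t` at which `σ ↦ l(t-σ) v̇(σ)` is integrable on `(0,t)`; this holds for almost every `t`
because the convolution of two integrable functions exists almost everywhere. Put
`W(x) = ∫₀ˣ l(t-σ) v̇(σ) dσ`. Writing `φ(t) - φ(σ) = ∫_σ^t φ̇` and swapping the integrals over the
triangle `σ < x < t` gives `φ(t) ∫₀ᵗ l(t-σ) v̇(σ) dσ - ∫₀ᵗ l(t-σ) φ(σ) v̇(σ) dσ = ∫₀ᵗ φ̇ W`.
The same manipulation with `l(t-x) - l(t-σ) = -∫_σ^x l̇(t-y) dy` gives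
`l(t-x) v(x) - W(x) = -∫₀ˣ l̇(t-y) v(y) dy ≥ 0`, as `l̇ ≤ 0` and `v ≥ 0`.
Since `φ̇ ≥ 0`, this bounds `∫₀ᵗ φ̇ W` by `∫₀ᵗ l(t-x) φ̇(x) v(x) dx`.
-/

theorem accPt_principal_of_mem_nhds {x : ℝ} {s : Set ℝ} (hs : s ∈ 𝓝 x) : AccPt x (𝓟 s) :=
  accPt_iff_frequently_nhdsNE.2 (eventually_nhdsWithin_of_eventually_nhds hs).frequently

theorem integral_integral_mul_triangle_swap {a b : ℝ} {g h : ℝ → ℝ} (hab : a ≤ b)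
    (hg : IntervalIntegrable g volume a b) (hh : IntervalIntegrable h volume a b) :
    ∫ σ in a..b, (∫ x in σ..b, g x) * h σ = ∫ x in a..b, g x * ∫ σ in a..x, h σ := by
  set μ := volume.restrict (Ioc a b)
  set F : ℝ → ℝ → ℝ := fun x σ => (Iio x).indicator (fun σ => g x * h σ) σ
  have hF : Integrable (Function.uncurry F) (μ.prod μ) :=
    (((intervalIntegrable_iff_integrableOn_Ioc_of_le hab).1 hg).mul_prod
      ((intervalIntegrable_iff_integrableOn_Ioc_of_le hab).1 hh)).indicator
      (measurableSet_lt measurable_snd measurable_fst)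
  calc ∫ σ in a..b, (∫ x in σ..b, g x) * h σ
      = ∫ σ, ∫ x, F x σ ∂μ ∂μ := by
        rw [integral_of_le hab]
        refine setIntegral_congr_fun measurableSet_Ioc fun σ hσ => ?_
        have hFσ : (F · σ) = (Ioi σ).indicator (fun x => g x * h σ) := by
          ext x; simp [F, indicator]
        rw [hFσ, setIntegral_indicator measurableSet_Ioi, Ioc_inter_Ioi, sup_eq_right.2 hσ.1.le,
          integral_of_le hσ.2, MeasureTheory.integral_mul_const]
    _ = ∫ x, ∫ σ, F x σ ∂μ ∂μ := (integral_integral_swap hF).symm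
    _ = ∫ x in a..b, g x * ∫ σ in a..x, h σ := by
        rw [integral_of_le hab]
        refine setIntegral_congr_fun measurableSet_Ioc fun x hx => ?_
        have hIoo : Ioc a b ∩ Iio x = Ioo a x := by
          ext σ
          simp only [mem_inter_iff, mem_Ioc, mem_Iio, mem_Ioo]
          grind
        rw [setIntegral_indicator measurableSet_Iio, hIoo, integral_of_le hx.1.le,
          MeasureTheory.integral_const_mul, integral_Ioc_eq_integral_Ioo]

theorem integral_sub_mul_eq_integral_deriv_mul_primitive {a b : ℝ} {F F' h : ℝ → ℝ}
    (hab : a ≤ b) (hF : ContinuousOn F (Icc a b)) (hF' : ∀ x ∈ Ioo a b, HasDerivAt F (F' x) x)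
    (hF'int : IntervalIntegrable F' volume a b) (hh : IntervalIntegrable h volume a b) :
    ∫ σ in a..b, (F b - F σ) * h σ = ∫ x in a..b, F' x * ∫ σ in a..x, h σ := by
  rw [← integral_integral_mul_triangle_swap hab hF'int hh]
  refine integral_congr fun σ hσ => ?_
  rw [uIcc_of_le hab] at hσ
  rw [integral_eq_sub_of_hasDerivAt_of_le hσ.2 (hF.mono (Icc_subset_Icc_left hσ.1))
    (fun x hx => hF' x (Ioo_subset_Ioo_left hσ.1 hx))
    (hF'int.mono_set (by rw [uIcc_of_le hab, uIcc_of_le hσ.2]; exact Icc_subset_Icc_left hσ.1))]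

theorem integral_mul_le_mul_integral_of_primitive_nonneg {a b : ℝ} {F F' h : ℝ → ℝ}
    (hab : a ≤ b) (hF : ContinuousOn F (Icc a b)) (hF' : ∀ x ∈ Ioo a b, HasDerivAt F (F' x) x)
    (hF'int : IntervalIntegrable F' volume a b) (hF'_nonneg : ∀ x ∈ Ioo a b, 0 ≤ F' x)
    (hh : IntervalIntegrable h volume a b) (hH : ∀ x ∈ Ioo a b, 0 ≤ ∫ σ in a..x, h σ) :
    ∫ σ in a..b, F σ * h σ ≤ F b * ∫ σ in a..b, h σ := by
  have hFh : IntervalIntegrable (fun σ => F σ * h σ) volume a b :=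
    hh.continuousOn_mul (by rwa [uIcc_of_le hab])
  have hparts := integral_sub_mul_eq_integral_deriv_mul_primitive hab hF hF' hF'int hh
  simp only [sub_mul] at hparts
  rw [integral_sub (hh.const_mul _) hFh, intervalIntegral.integral_const_mul] at hparts
  have : 0 ≤ ∫ x in a..b, F' x * ∫ σ in a..x, h σ :=
    integral_nonneg_of_ae_restrict hab <| by
      rw [← Measure.restrict_congr_set Ioo_ae_eq_Icc]
      filter_upwards [ae_restrict_mem measurableSet_Ioo] with x hx
      exact mul_nonneg (hF'_nonneg x hx) (hH x hx)
  linarith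

theorem integral_comp_sub_mul_le {T t x : ℝ} {l l' h : ℝ → ℝ} (hx : 0 ≤ x) (hxt : x < t)
    (htT : t < T) (hl : ∀ s ∈ Ioo 0 T, HasDerivAt l (l' s) s) (hl' : ContinuousOn l' (Ioo 0 T))
    (hl_anti : AntitoneOn l (Ioo 0 T)) (hh : IntervalIntegrable h volume 0 x)
    (hH : ∀ y ∈ Ioo 0 x, 0 ≤ ∫ σ in 0..y, h σ) :
    ∫ σ in 0..x, l (t - σ) * h σ ≤ l (t - x) * ∫ σ in 0..x, h σ := by
  have hmem : ∀ y ∈ Icc 0 x, t - y ∈ Ioo 0 T := fun y hy =>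
    ⟨by linarith [hy.2], by linarith [hy.1]⟩
  have hderiv : ∀ y ∈ Icc 0 x, HasDerivAt (fun σ => l (t - σ)) (-l' (t - y)) y := fun y hy =>
    (hl (t - y) (hmem y hy)).comp_const_sub t y
  refine integral_mul_le_mul_integral_of_primitive_nonneg hx
    (fun y hy => (hderiv y hy).continuousAt.continuousWithinAt)
    (fun y hy => hderiv y (Ioo_subset_Icc_self hy)) ?_ (fun y hy => ?_) hh hH
  · refine ContinuousOn.intervalIntegrable ?_
    rw [uIcc_of_le hx]
    exact (hl'.comp (continuousOn_const.sub continuousOn_id) hmem).neg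
  · have hy' := hmem y (Ioo_subset_Icc_self hy)
    exact neg_nonneg.2 <| (hl _ hy').hasDerivWithinAt.nonpos_of_antitoneOn
      (accPt_principal_of_mem_nhds (Ioo_mem_nhds hy'.1 hy'.2)) hl_anti

theorem ae_intervalIntegrable_mul_comp_sub {T : ℝ} {f g : ℝ → ℝ}
    (hf : IntegrableOn f (Ioo 0 T)) (hg : IntegrableOn g (Ioo 0 T)) :
    ∀ᵐ t, t ∈ Ioo 0 T → IntervalIntegrable (fun σ => f (t - σ) * g σ) volume 0 t := by
  have hconv := ((integrable_indicator_iff measurableSet_Ioo).2 hg).ae_convolution_exists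
    (ContinuousLinearMap.mul ℝ ℝ) ((integrable_indicator_iff measurableSet_Ioo).2 hf)
  filter_upwards [hconv] with t ht htT
  rw [intervalIntegrable_iff_integrableOn_Ioo_of_le htT.1.le]
  refine ht.integrable.integrableOn.congr_fun (fun σ hσ => ?_) measurableSet_Ioo
  have hσT : σ ∈ Ioo 0 T := ⟨hσ.1, hσ.2.trans htT.2⟩
  have htσ : t - σ ∈ Ioo 0 T := ⟨by linarith [hσ.2], by linarith [hσ.1, htT.2]⟩
  simp [indicator_of_mem hσT, indicator_of_mem htσ, mul_comm]

theorem convolution_inequality_of_intervalIntegrable {T t : ℝ} {l l' φ φ' vdot v : ℝ → ℝ}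
    (ht : t ∈ Ioo 0 T) (hl_int : IntegrableOn l (Ioo 0 T))
    (hl_deriv : ∀ s ∈ Ioo 0 T, HasDerivAt l (l' s) s) (hl'_cont : ContinuousOn l' (Ioo 0 T))
    (hl_mono : AntitoneOn l (Ioo 0 T))
    (hφ_deriv : ∀ s ∈ Icc 0 T, HasDerivWithinAt φ (φ' s) (Icc 0 T) s)
    (hφ'_cont : ContinuousOn φ' (Icc 0 T)) (hφ_mono : MonotoneOn φ (Icc 0 T))
    (hvdot : IntegrableOn vdot (Ioo 0 T)) (hv : ∀ s ∈ Icc 0 T, v s = ∫ σ in 0..s, vdot σ)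
    (hv_nonneg : ∀ s ∈ Icc 0 T, 0 ≤ v s)
    (hk : IntervalIntegrable (fun σ => l (t - σ) * vdot σ) volume 0 t) :
    φ t * (∫ σ in 0..t, l (t - σ) * vdot σ) - ∫ σ in 0..t, l (t - σ) * φ' σ * v σ ≤
      ∫ σ in 0..t, l (t - σ) * (φ σ * vdot σ) := by
  have hsub : uIcc 0 t ⊆ Icc 0 T := by
    rw [uIcc_of_le ht.1.le]; exact Icc_subset_Icc_right ht.2.le
  have hIoo : Ioo 0 t ⊆ Ioo 0 T := Ioo_subset_Ioo_right ht.2.le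
  have hφ : ContinuousOn φ (uIcc 0 t) :=
    fun s hs => (hφ_deriv s (hsub hs)).continuousWithinAt.mono hsub
  have hφ' : ContinuousOn φ' (uIcc 0 t) := hφ'_cont.mono hsub
  have hv_cont : ContinuousOn v (uIcc 0 t) :=
    (continuousOn_primitive_interval' ((intervalIntegrable_iff_integrableOn_Ioo_of_le
      ht.1.le).2 (hvdot.mono_set hIoo)) left_mem_uIcc).congr fun s hs => hv s (hsub hs)
  have hl_t : IntervalIntegrable (fun σ => l (t - σ)) volume 0 t := by
    simpa using (((intervalIntegrable_iff_integrableOn_Ioo_of_le ht.1.le).2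
      (hl_int.mono_set hIoo)).comp_sub_left t).symm
  set W := fun x => ∫ σ in 0..x, l (t - σ) * vdot σ
  have hW : ContinuousOn W (uIcc 0 t) := continuousOn_primitive_interval' hk left_mem_uIcc
  have hφk : IntervalIntegrable (fun σ => l (t - σ) * (φ σ * vdot σ)) volume 0 t := by
    simpa only [mul_left_comm] using hk.continuousOn_mul hφ
  have hdiff : φ t * (∫ σ in 0..t, l (t - σ) * vdot σ) - ∫ σ in 0..t, l (t - σ) * (φ σ * vdot σ) =
      ∫ x in 0..t, φ' x * W x := by
    rw [← integral_sub_mul_eq_integral_deriv_mul_primitive ht.1.le (by rwa [← uIcc_of_le ht.1.le])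
        (fun s hs => (hφ_deriv s ⟨hs.1.le, (hs.2.trans ht.2).le⟩).hasDerivAt
          (Icc_mem_nhds hs.1 (hs.2.trans ht.2))) hφ'.intervalIntegrable hk,
      ← intervalIntegral.integral_const_mul, ← integral_sub (hk.const_mul _) hφk]
    congr 1; ext σ; ring
  have hbound : ∫ x in 0..t, φ' x * W x ≤ ∫ x in 0..t, l (t - x) * φ' x * v x := by
    refine integral_mono_ae_restrict ht.1.le ((hφ'.mul hW).intervalIntegrable)
      ((hl_t.mul_continuousOn hφ').mul_continuousOn hv_cont) ?_
    rw [← Measure.restrict_congr_set Ioo_ae_eq_Icc]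
    filter_upwards [ae_restrict_mem measurableSet_Ioo] with x hx
    have hxT : x ∈ Ioo 0 T := hIoo hx
    have hφ'x : 0 ≤ φ' x := (hφ_deriv x (Ioo_subset_Icc_self hxT)).nonneg_of_monotoneOn
      (accPt_principal_of_mem_nhds (Icc_mem_nhds hxT.1 hxT.2)) hφ_mono
    have hWx : W x ≤ l (t - x) * v x := by
      rw [hv x (Ioo_subset_Icc_self hxT)]
      refine integral_comp_sub_mul_le hx.1.le hx.2 ht.2 hl_deriv hl'_cont hl_mono
        ((intervalIntegrable_iff_integrableOn_Ioo_of_le hx.1.le).2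
          (hvdot.mono_set (Ioo_subset_Ioo_right hxT.2.le))) fun y hy => ?_
      rw [← hv y ⟨hy.1.le, (hy.2.trans hxT.2).le⟩]
      exact hv_nonneg y ⟨hy.1.le, (hy.2.trans hxT.2).le⟩
    calc φ' x * W x ≤ φ' x * (l (t - x) * v x) := mul_le_mul_of_nonneg_left hWx hφ'x
      _ = l (t - x) * φ' x * v x := by ring
  linarith

theorem convolution_inequality_general (T : ℝ)
    (l l' φ φ' vdot : ℝ → ℝ) (v : ℝ → ℝ)
    (hl_int : IntegrableOn l (Ioo 0 T))
    (hl_deriv : ∀ t ∈ Ioo (0:ℝ) T, HasDerivAt l (l' t) t)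
    (hl'_cont : ContinuousOn l' (Ioo 0 T))
    (hl_mono : AntitoneOn l (Ioo 0 T))
    (hφ_deriv : ∀ t ∈ Icc (0:ℝ) T, HasDerivWithinAt φ (φ' t) (Icc 0 T) t)
    (hφ'_cont : ContinuousOn φ' (Icc 0 T))
    (hφ_mono : MonotoneOn φ (Icc 0 T))
    (hvdot : IntegrableOn vdot (Ioo 0 T))
    (hv : ∀ t ∈ Icc (0:ℝ) T, v t = ∫ σ in (0:ℝ)..t, vdot σ)
    (hv_nonneg : ∀ t ∈ Icc (0:ℝ) T, 0 ≤ v t) :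
    ∀ᵐ t : ℝ, t ∈ Ioo 0 T →
      (∫ σ in (0:ℝ)..t, l (t - σ) * (φ σ * vdot σ)) ≥
        φ t * (∫ σ in (0:ℝ)..t, l (t - σ) * vdot σ) -
          ∫ σ in (0:ℝ)..t, l (t - σ) * φ' σ * v σ := by
  filter_upwards [ae_intervalIntegrable_mul_comp_sub hl_int hvdot] with t hk ht
  exact convolution_inequality_of_intervalIntegrable ht hl_int hl_deriv hl'_cont hl_mono hφ_deriv
    hφ'_cont hφ_mono hvdot hv hv_nonneg (hk ht)

/-- Lemma 2.3, second assertion: for `l ∈ L₁((0,T)) ∩ C¹((0,T))` nonnegative and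
nonincreasing, `φ ∈ C¹([0,T])` nondecreasing and `v(t) = ∫₀ᵗ v̇` nonnegative,
for a.e. `t ∈ (0,T)` one has
`(l * (φ v̇))(t) ≥ φ(t) (l * v̇)(t) − ∫₀ᵗ l(t−σ) φ̇(σ) v(σ) dσ`. -/
theorem convolution_inequality (T : ℝ) (hT : 0 < T)
    (l l' φ φ' vdot : ℝ → ℝ) (v : ℝ → ℝ)
    (hl_int : IntegrableOn l (Ioo 0 T))
    (hl_deriv : ∀ t ∈ Ioo (0:ℝ) T, HasDerivAt l (l' t) t)
    (hl'_cont : ContinuousOn l' (Ioo 0 T))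
    (hl_nonneg : ∀ t ∈ Ioo (0:ℝ) T, 0 ≤ l t)
    (hl_mono : AntitoneOn l (Ioo 0 T))
    (hφ_deriv : ∀ t ∈ Icc (0:ℝ) T, HasDerivWithinAt φ (φ' t) (Icc 0 T) t)
    (hφ'_cont : ContinuousOn φ' (Icc 0 T))
    (hφ_mono : MonotoneOn φ (Icc 0 T))
    (hvdot : IntegrableOn vdot (Ioo 0 T))
    (hv : ∀ t ∈ Icc (0:ℝ) T, v t = ∫ σ in (0:ℝ)..t, vdot σ)
    (hv_nonneg : ∀ t ∈ Icc (0:ℝ) T, 0 ≤ v t) :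
    ∀ᵐ t : ℝ, t ∈ Ioo 0 T →
      (∫ σ in (0:ℝ)..t, l (t - σ) * (φ σ * vdot σ)) ≥
        φ t * (∫ σ in (0:ℝ)..t, l (t - σ) * vdot σ) -
          ∫ σ in (0:ℝ)..t, l (t - σ) * φ' σ * v σ :=
  convolution_inequality_general T l l' φ φ' vdot v hl_int hl_deriv hl'_cont hl_mono hφ_deriv
    hφ'_cont hφ_mono hvdot hv hv_nonneg
end

section
/- Let T > 0, let k : [0,T] → ℝ be absolutely continuous, i.e. k(t) = k(0) + ∫₀^t k̇(s) ds with k̇ ∈ L₁((0,T)), let v ∈ L₁((0,T)) and φ ∈ C¹([0,T]). Then for almost every t ∈ (0,T) the functions k*v and k*(φ·v) are differentiable at t and φ(t)·(d/dt)(k*v)(t) = (d/dt)(k*[φ·v])(t) + ∫₀^t k̇(t−τ)·(φ(t)−φ(τ))·v(τ) dτ. -/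
open MeasureTheory Set intervalIntegral Filter ContinuousLinearMap
open scoped Convolution

/-!
Extend `k̇` and `u` by zero outside `(0, T)`. Writing `k (t - s) = k 0 + ∫₀^{t-s} k̇` and
exchanging the order of integration gives `(k * u)(t) = k 0 ∫₀^t u + ∫₀^t (k̇ * u)`, so by the
Lebesgue differentiation theorem `(k * u)' = k 0 u + k̇ * u` almost everywhere. Applied to
`u = v` and `u = φ v`, the `k 0` terms cancel after multiplying the first identity by `φ t`,
and what remains is `φ t (k̇ * v)(t) - (k̇ * (φ v))(t) = ∫₀^t k̇(t - s)(φ t - φ s) v s ds`.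
-/

section Causal

variable {K V : ℝ → ℝ}

lemma intervalIntegral_eq_zero_of_nonpos (hK : ∀ x ≤ 0, K x = 0) {y : ℝ} (hy : y ≤ 0) :
    ∫ x in (0:ℝ)..y, K x = 0 := by
  rw [intervalIntegral.integral_of_ge hy,
    setIntegral_eq_zero_of_forall_eq_zero fun x hx => hK x hx.2, neg_zero]

lemma convolution_mul_eq_intervalIntegral (hV : ∀ x ≤ 0, V x = 0) (hK : ∀ x ≤ 0, K x = 0)
    {t : ℝ} (ht : 0 ≤ t) :
    (V ⋆[mul ℝ ℝ] K) t = ∫ s in (0:ℝ)..t, V s * K (t - s) := by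
  rw [convolution_mul, intervalIntegral.integral_of_le ht,
    setIntegral_eq_integral_of_forall_compl_eq_zero]
  intro s hs
  rcases le_or_gt s 0 with hs0 | hs0
  · rw [hV s hs0, zero_mul]
  · rw [hK (t - s) (by linarith [not_le.mp fun h => hs ⟨hs0, h⟩]), mul_zero]

lemma intervalIntegral_convolution_mul (hVi : Integrable V) (hKi : Integrable K)
    (hV : ∀ x ≤ 0, V x = 0) (hK : ∀ x ≤ 0, K x = 0) {t : ℝ} (ht : 0 ≤ t) :
    ∫ σ in (0:ℝ)..t, (V ⋆[mul ℝ ℝ] K) σ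
      = ∫ s in (0:ℝ)..t, (∫ x in (0:ℝ)..(t - s), K x) * V s := by
  have hint : Integrable (fun p : ℝ × ℝ => V p.2 * K (p.1 - p.2))
      ((volume.restrict (Ioc 0 t)).prod volume) :=
    (hVi.convolution_integrand (mul ℝ ℝ) hKi).mono_measure
      (Measure.prod_mono Measure.restrict_le_self le_rfl)
  have hinner : ∀ s, ∫ σ in Ioc 0 t, V s * K (σ - s) = (∫ x in (0:ℝ)..(t - s), K x) * V s := by
    intro s
    rcases le_or_gt s 0 with hs0 | hs0
    · simp [hV s hs0]
    rw [MeasureTheory.integral_const_mul, ← intervalIntegral.integral_of_le ht,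
      intervalIntegral.integral_comp_sub_right (fun x => K x),
      ← intervalIntegral.integral_interval_sub_left (a := 0) hKi.intervalIntegrable
        hKi.intervalIntegrable,
      intervalIntegral_eq_zero_of_nonpos hK (y := 0 - s) (by linarith), sub_zero, mul_comm]
  calc ∫ σ in (0:ℝ)..t, (V ⋆[mul ℝ ℝ] K) σ
      = ∫ σ in Ioc 0 t, ∫ s, V s * K (σ - s) := intervalIntegral.integral_of_le ht
    _ = ∫ s, ∫ σ in Ioc 0 t, V s * K (σ - s) := integral_integral_swap hint
    _ = ∫ s, (∫ x in (0:ℝ)..(t - s), K x) * V s := by simp only [hinner]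
    _ = ∫ s in Ioc 0 t, (∫ x in (0:ℝ)..(t - s), K x) * V s := by
      refine (setIntegral_eq_integral_of_forall_compl_eq_zero fun s hs => ?_).symm
      rcases le_or_gt s 0 with hs0 | hs0
      · rw [hV s hs0, mul_zero]
      · rw [intervalIntegral_eq_zero_of_nonpos hK
          (by linarith [not_le.mp fun h => hs ⟨hs0, h⟩]), zero_mul]
    _ = ∫ s in (0:ℝ)..t, (∫ x in (0:ℝ)..(t - s), K x) * V s :=
      (intervalIntegral.integral_of_le ht).symm

lemma intervalIntegral_const_add_primitive_mul (hVi : Integrable V) (hKi : Integrable K)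
    (hV : ∀ x ≤ 0, V x = 0) (hK : ∀ x ≤ 0, K x = 0) (c : ℝ) {t : ℝ} (ht : 0 ≤ t) :
    ∫ s in (0:ℝ)..t, (c + ∫ x in (0:ℝ)..(t - s), K x) * V s
      = ∫ s in (0:ℝ)..t, (c * V s + (V ⋆[mul ℝ ℝ] K) s) := by
  have hP : Continuous fun s => ∫ x in (0:ℝ)..(t - s), K x :=
    (intervalIntegral.continuous_primitive (fun _ _ => hKi.intervalIntegrable) 0).comp
      (continuous_const.sub continuous_id)
  simp only [add_mul]
  rw [intervalIntegral.integral_add (hVi.intervalIntegrable.const_mul c)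
      (hVi.intervalIntegrable.continuousOn_mul hP.continuousOn),
    intervalIntegral.integral_add (hVi.intervalIntegrable.const_mul c)
      (hVi.integrable_convolution (mul ℝ ℝ) hKi).intervalIntegrable,
    intervalIntegral_convolution_mul hVi hKi hV hK ht]

lemma ae_hasDerivAt_intervalIntegral_const_add_primitive_mul (hVi : Integrable V)
    (hKi : Integrable K) (hV : ∀ x ≤ 0, V x = 0) (hK : ∀ x ≤ 0, K x = 0) (c : ℝ) :
    ∀ᵐ t, 0 < t → HasDerivAt (fun τ => ∫ s in (0:ℝ)..τ, (c + ∫ x in (0:ℝ)..(τ - s), K x) * V s)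
      (c * V t + (V ⋆[mul ℝ ℝ] K) t) t := by
  have hint : Integrable fun s => c * V s + (V ⋆[mul ℝ ℝ] K) s :=
    (hVi.const_mul c).add (hVi.integrable_convolution (mul ℝ ℝ) hKi)
  filter_upwards [LocallyIntegrable.ae_hasDerivAt_integral hint.locallyIntegrable] with t hderiv ht
  refine (hderiv 0).congr_of_eventuallyEq ?_
  filter_upwards [Ioi_mem_nhds ht] with τ hτ
  exact intervalIntegral_const_add_primitive_mul hVi hKi hV hK c (le_of_lt hτ)

end Causal

section IndicatorIoo

variable {T : ℝ}

lemma indicator_Ioo_eq_zero_of_nonpos (f : ℝ → ℝ) : ∀ x ≤ 0, (Ioo 0 T).indicator f x = 0 :=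
  fun _ hx => indicator_of_notMem (fun h => hx.not_gt h.1) f

lemma intervalIntegral_indicator_Ioo (f : ℝ → ℝ) {t : ℝ} (ht₀ : 0 ≤ t) (htT : t < T) :
    ∫ x in (0:ℝ)..t, (Ioo 0 T).indicator f x = ∫ x in (0:ℝ)..t, f x := by
  simp only [intervalIntegral.integral_of_le ht₀]
  exact setIntegral_congr_fun measurableSet_Ioc
    fun x hx => indicator_of_mem (show x ∈ Ioo 0 T from ⟨hx.1, hx.2.trans_lt htT⟩) f

lemma indicator_mul_indicator_ae_eq (kdot u : ℝ → ℝ) {t : ℝ} (ht : t ∈ Ioo 0 T) :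
    (fun s => (Ioo 0 T).indicator u s * (Ioo 0 T).indicator kdot (t - s))
      =ᵐ[volume.restrict (Ioc 0 t)] fun s => kdot (t - s) * u s := by
  filter_upwards [ae_restrict_mem measurableSet_Ioc, ae_restrict_of_ae (volume.ae_ne t)]
    with s hs hst
  have hts : t - s ∈ Ioo 0 T :=
    ⟨sub_pos.mpr (lt_of_le_of_ne hs.2 hst), by linarith [hs.1, ht.2]⟩
  rw [indicator_of_mem (show s ∈ Ioo 0 T from ⟨hs.1, hs.2.trans_lt ht.2⟩),
    indicator_of_mem hts, mul_comm]

lemma convolution_indicator_Ioo_eq (kdot u : ℝ → ℝ) {t : ℝ} (ht : t ∈ Ioo 0 T) :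
    ((Ioo 0 T).indicator u ⋆[mul ℝ ℝ] (Ioo 0 T).indicator kdot) t
      = ∫ s in (0:ℝ)..t, kdot (t - s) * u s := by
  rw [convolution_mul_eq_intervalIntegral (indicator_Ioo_eq_zero_of_nonpos u)
      (indicator_Ioo_eq_zero_of_nonpos kdot) ht.1.le,
    intervalIntegral.integral_of_le ht.1.le, intervalIntegral.integral_of_le ht.1.le]
  exact integral_congr_ae (indicator_mul_indicator_ae_eq kdot u ht)

lemma MeasureTheory.ConvolutionExistsAt.intervalIntegrable_of_indicator_Ioo {kdot u : ℝ → ℝ} {t : ℝ}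
    (h : ConvolutionExistsAt ((Ioo 0 T).indicator u) ((Ioo 0 T).indicator kdot) t (mul ℝ ℝ))
    (ht : t ∈ Ioo 0 T) :
    IntervalIntegrable (fun s => kdot (t - s) * u s) volume 0 t := by
  rw [intervalIntegrable_iff_integrableOn_Ioc_of_le ht.1.le]
  exact h.integrable.integrableOn.congr_fun_ae (indicator_mul_indicator_ae_eq kdot u ht)

lemma intervalIntegral_mul_eq_primitive_indicator_Ioo {k kdot : ℝ → ℝ}
    (hk : ∀ t ∈ Icc (0:ℝ) T, k t = k 0 + ∫ s in (0:ℝ)..t, kdot s) (u : ℝ → ℝ) {t : ℝ}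
    (ht : t ∈ Ioo 0 T) :
    ∫ s in (0:ℝ)..t, k (t - s) * u s
      = ∫ s in (0:ℝ)..t, (k 0 + ∫ x in (0:ℝ)..(t - s), (Ioo 0 T).indicator kdot x)
          * (Ioo 0 T).indicator u s := by
  refine intervalIntegral.integral_congr_ae (Eventually.of_forall fun s hs => ?_)
  rw [uIoc_of_le ht.1.le] at hs
  have hts₀ : 0 ≤ t - s := by linarith [hs.2]
  have htsT : t - s < T := by linarith [hs.1, ht.2]
  rw [hk (t - s) ⟨hts₀, htsT.le⟩, intervalIntegral_indicator_Ioo kdot hts₀ htsT,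
    indicator_of_mem (show s ∈ Ioo 0 T from ⟨hs.1, hs.2.trans_lt ht.2⟩)]

lemma ae_hasDerivAt_intervalIntegral_mul {k kdot u : ℝ → ℝ} (hkdot : IntegrableOn kdot (Ioo 0 T))
    (hk : ∀ t ∈ Icc (0:ℝ) T, k t = k 0 + ∫ s in (0:ℝ)..t, kdot s)
    (hu : IntegrableOn u (Ioo 0 T)) :
    ∀ᵐ t, t ∈ Ioo 0 T →
      IntervalIntegrable (fun s => kdot (t - s) * u s) volume 0 t ∧
      HasDerivAt (fun τ => ∫ s in (0:ℝ)..τ, k (τ - s) * u s)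
        (k 0 * u t + ∫ s in (0:ℝ)..t, kdot (t - s) * u s) t := by
  have hK := hkdot.integrable_indicator measurableSet_Ioo
  have hU := hu.integrable_indicator measurableSet_Ioo
  filter_upwards [ae_hasDerivAt_intervalIntegral_const_add_primitive_mul hU hK
      (indicator_Ioo_eq_zero_of_nonpos u) (indicator_Ioo_eq_zero_of_nonpos kdot) (k 0),
    hU.ae_convolution_exists (mul ℝ ℝ) hK] with t hderiv hconv ht
  refine ⟨hconv.intervalIntegrable_of_indicator_Ioo ht, ?_⟩
  have h := (hderiv ht.1).congr_of_eventuallyEq <| by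
    filter_upwards [Ioo_mem_nhds ht.1 ht.2] with τ hτ using
      intervalIntegral_mul_eq_primitive_indicator_Ioo hk u hτ
  rwa [indicator_of_mem ht, convolution_indicator_Ioo_eq kdot u ht] at h

end IndicatorIoo

theorem product_rule_convolution_general (T : ℝ)
    (k kdot v φ φ' : ℝ → ℝ)
    (hkdot : IntegrableOn kdot (Ioo 0 T))
    (hk : ∀ t ∈ Icc (0:ℝ) T, k t = k 0 + ∫ s in (0:ℝ)..t, kdot s)
    (hv : IntegrableOn v (Ioo 0 T))
    (hφ_deriv : ∀ t ∈ Icc (0:ℝ) T, HasDerivWithinAt φ (φ' t) (Icc 0 T) t) :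
    ∀ᵐ t : ℝ, t ∈ Ioo 0 T →
      ∃ d₁ d₂ : ℝ,
        HasDerivAt (fun τ => ∫ s in (0:ℝ)..τ, k (τ - s) * v s) d₁ t ∧
        HasDerivAt (fun τ => ∫ s in (0:ℝ)..τ, k (τ - s) * (φ s * v s)) d₂ t ∧
        φ t * d₁ = d₂ + ∫ s in (0:ℝ)..t, kdot (t - s) * (φ t - φ s) * v s := by
  have hφ : ContinuousOn φ (Icc 0 T) := fun t ht => (hφ_deriv t ht).continuousWithinAt
  have hφv : IntegrableOn (fun s => φ s * v s) (Ioo 0 T) :=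
    (((integrableOn_Icc_iff_integrableOn_Ioo).mpr hv).continuousOn_mul hφ isCompact_Icc).mono_set
      Ioo_subset_Icc_self
  filter_upwards [ae_hasDerivAt_intervalIntegral_mul hkdot hk hv,
    ae_hasDerivAt_intervalIntegral_mul hkdot hk hφv] with t h₁ h₂ ht
  obtain ⟨hint₁, hderiv₁⟩ := h₁ ht
  obtain ⟨hint₂, hderiv₂⟩ := h₂ ht
  refine ⟨_, _, hderiv₁, hderiv₂, ?_⟩
  have hsplit : (fun s => kdot (t - s) * (φ t - φ s) * v s)
      = fun s => φ t * (kdot (t - s) * v s) - kdot (t - s) * (φ s * v s) := by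
    ext s; ring
  rw [hsplit, intervalIntegral.integral_sub (hint₁.const_mul _) hint₂,
    intervalIntegral.integral_const_mul]
  ring

/-- Lemma 2.4: for `k ∈ H¹₁([0,T])` (absolutely continuous with derivative
`k̇ ∈ L₁`), `v ∈ L₁((0,T))` and `φ ∈ C¹([0,T])`, for a.e. `t ∈ (0,T)` the
convolutions `k*v` and `k*(φ v)` are differentiable at `t` and
`φ(t) (d/dt)(k*v)(t) = (d/dt)(k*(φ v))(t) + ∫₀ᵗ k̇(t−τ)(φ(t)−φ(τ)) v(τ) dτ`. -/
theorem product_rule_convolution (T : ℝ) (hT : 0 < T)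
    (k kdot v φ φ' : ℝ → ℝ)
    (hkdot : IntegrableOn kdot (Ioo 0 T))
    (hk : ∀ t ∈ Icc (0:ℝ) T, k t = k 0 + ∫ s in (0:ℝ)..t, kdot s)
    (hv : IntegrableOn v (Ioo 0 T))
    (hφ_deriv : ∀ t ∈ Icc (0:ℝ) T, HasDerivWithinAt φ (φ' t) (Icc 0 T) t)
    (hφ'_cont : ContinuousOn φ' (Icc 0 T)) :
    ∀ᵐ t : ℝ, t ∈ Ioo 0 T →
      ∃ d₁ d₂ : ℝ,
        HasDerivAt (fun τ => ∫ s in (0:ℝ)..τ, k (τ - s) * v s) d₁ t ∧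
        HasDerivAt (fun τ => ∫ s in (0:ℝ)..τ, k (τ - s) * (φ s * v s)) d₂ t ∧
        φ t * d₁ = d₂ + ∫ s in (0:ℝ)..t, kdot (t - s) * (φ t - φ s) * v s :=
  product_rule_convolution_general T k kdot v φ φ' hkdot hk hv hφ_deriv
end

section
/- Assume (K0) and (K1), with p₀ > 1, t₀ > 0 and c̄ > 1 the constants from (K1). Then ∫₀^t k(s) ds ≤ c̄ · t · k₁(t) for all t ∈ (0, t₀), where k₁(t) = ( ∫₀^t l(s) ds )^{−1}. -/
/-!
Since `l` is nonincreasing, `l s ≥ l t` for `s ∈ (0, t)`. Hence `l t · ∫₀ᵗ k ≤ (k * l)(t) = 1`,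
and `l t ^ (p₀ - 1) · ∫₀ᵗ l ≤ ∫₀ᵗ l ^ p₀ ≤ c̄ t l t ^ p₀` by (K1), i.e. `∫₀ᵗ l ≤ c̄ t l t`,
as soon as `l t > 0`. Positivity holds because `l t = 0` would make `∫₀ᵗ l ^ p₀ = 0` by (K1),
so `l = 0` a.e. on `(0, t)`, contradicting `(k * l)(t) = 1`.
Altogether `∫₀ᵗ k ≤ 1 / l t ≤ c̄ t / ∫₀ᵗ l`.
-/

open MeasureTheory Set intervalIntegral

theorem mul_integral_le_integral_mul_of_antitoneOn {f g : ℝ → ℝ} {t : ℝ} (ht : 0 ≤ t)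
    (hf : AntitoneOn f (Ioc 0 t)) (hg : ∀ s ∈ Ioo 0 t, 0 ≤ g s)
    (hgi : IntervalIntegrable g volume 0 t)
    (hgfi : IntervalIntegrable (fun s => g s * f s) volume 0 t) :
    f t * ∫ s in (0:ℝ)..t, g s ≤ ∫ s in (0:ℝ)..t, g s * f s := by
  rw [← intervalIntegral.integral_const_mul]
  refine integral_mono_on_of_le_Ioo ht (hgi.const_mul _) hgfi fun s hs => ?_
  rw [mul_comm]
  exact mul_le_mul_of_nonneg_left
    (hf ⟨hs.1, hs.2.le⟩ ⟨hs.1.trans hs.2, le_rfl⟩ hs.2.le) (hg s hs)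

theorem mul_le_integral_of_antitoneOn {f : ℝ → ℝ} {t : ℝ} (ht : 0 ≤ t)
    (hf : AntitoneOn f (Ioc 0 t)) (hfi : IntervalIntegrable f volume 0 t) :
    t * f t ≤ ∫ s in (0:ℝ)..t, f s := by
  simpa [mul_comm] using mul_integral_le_integral_mul_of_antitoneOn (g := fun _ => 1) ht hf
    (fun _ _ => zero_le_one) intervalIntegrable_const (by simpa using hfi)

theorem mul_integral_le_integral_comp_sub_mul_of_antitoneOn {f g : ℝ → ℝ} {t : ℝ} (ht : 0 ≤ t)
    (hf : AntitoneOn f (Ioc 0 t)) (hg : ∀ s ∈ Ioo 0 t, 0 ≤ g s)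
    (hgi : IntervalIntegrable g volume 0 t)
    (hgfi : IntervalIntegrable (fun s => g (t - s) * f s) volume 0 t) :
    f t * ∫ s in (0:ℝ)..t, g s ≤ ∫ s in (0:ℝ)..t, g (t - s) * f s := by
  have h := mul_integral_le_integral_mul_of_antitoneOn (g := fun s => g (t - s)) ht hf
    (fun s hs => hg _ ⟨sub_pos.2 hs.2, sub_lt_self t hs.1⟩)
    (by simpa using (hgi.comp_sub_left t).symm) hgfi
  rwa [integral_comp_sub_left, sub_self, sub_zero] at h

theorem rpow_sub_one_mul_integral_le_integral_rpow_of_antitoneOn {f : ℝ → ℝ} {p t : ℝ}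
    (ht : 0 ≤ t) (hp : 1 ≤ p) (hf : AntitoneOn f (Ioc 0 t)) (hf0 : ∀ s ∈ Ioc 0 t, 0 ≤ f s)
    (hfi : IntervalIntegrable f volume 0 t)
    (hfpi : IntervalIntegrable (fun s => f s ^ p) volume 0 t) :
    f t ^ (p - 1) * ∫ s in (0:ℝ)..t, f s ≤ ∫ s in (0:ℝ)..t, f s ^ p := by
  have hsplit : EqOn (fun s => f s ^ p) (fun s => f s * f s ^ (p - 1)) (Ioo 0 t) := by
    intro s hs
    rcases (hf0 s (Ioo_subset_Ioc_self hs)).eq_or_lt with h0 | hpos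
    · simp [← h0, Real.zero_rpow (by linarith : p ≠ 0)]
    · simp only [Real.rpow_sub_one hpos.ne', mul_div_cancel₀ _ hpos.ne']
  have hpow_anti : AntitoneOn (fun s => f s ^ (p - 1)) (Ioc 0 t) := fun a ha b hb hab =>
    Real.rpow_le_rpow (hf0 b hb) (hf ha hb hab) (sub_nonneg.2 hp)
  rw [integral_congr_Ioo_of_le ht hsplit]
  exact mul_integral_le_integral_mul_of_antitoneOn ht hpow_anti
    (fun s hs => hf0 s (Ioo_subset_Ioc_self hs)) hfi (hfpi.congr_uIoo (uIoo_of_le ht ▸ hsplit))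

theorem integral_rpow_pos_of_integral_mul_ne_zero {f g : ℝ → ℝ} {p t : ℝ} (ht : 0 ≤ t)
    (hp : p ≠ 0) (hf0 : ∀ s ∈ Ioc 0 t, 0 ≤ f s)
    (hfpi : IntervalIntegrable (fun s => f s ^ p) volume 0 t)
    (hgf : ∫ s in (0:ℝ)..t, g s * f s ≠ 0) :
    0 < ∫ s in (0:ℝ)..t, f s ^ p := by
  have hfp0 : 0 ≤ᵐ[volume.restrict (Ioc 0 t)] fun s => f s ^ p :=
    ae_restrict_of_forall_mem measurableSet_Ioc fun s hs => Real.rpow_nonneg (hf0 s hs) p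
  have hnonneg : 0 ≤ ∫ s in (0:ℝ)..t, f s ^ p := by
    rw [integral_of_le ht]
    exact integral_nonneg_of_ae hfp0
  refine hnonneg.lt_of_ne' fun h => hgf ?_
  have hfp_ae : (fun s => f s ^ p) =ᵐ[volume.restrict (Ioc 0 t)] 0 :=
    (integral_eq_zero_iff_of_le_of_nonneg_ae ht hfp0 hfpi).1 h
  rw [integral_of_le ht]
  refine integral_eq_zero_of_ae ?_
  filter_upwards [hfp_ae, ae_restrict_mem measurableSet_Ioc] with s hs hmem
  simp [(Real.rpow_eq_zero (hf0 s hmem) hp).1 hs]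

theorem integral_le_of_integral_rpow_le_of_antitoneOn {f : ℝ → ℝ} {p t C : ℝ} (ht : 0 ≤ t)
    (hp : 1 ≤ p) (hf : AntitoneOn f (Ioc 0 t)) (hf0 : ∀ s ∈ Ioc 0 t, 0 ≤ f s)
    (hfi : IntervalIntegrable f volume 0 t)
    (hfpi : IntervalIntegrable (fun s => f s ^ p) volume 0 t) (hft : 0 < f t)
    (hC : ∫ s in (0:ℝ)..t, f s ^ p ≤ C * f t ^ p) :
    ∫ s in (0:ℝ)..t, f s ≤ C * f t := by
  refine le_of_mul_le_mul_left ?_ (Real.rpow_pos_of_pos hft (p - 1))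
  calc f t ^ (p - 1) * ∫ s in (0:ℝ)..t, f s ≤ ∫ s in (0:ℝ)..t, f s ^ p :=
        rpow_sub_one_mul_integral_le_integral_rpow_of_antitoneOn ht hp hf hf0 hfi hfpi
    _ ≤ C * f t ^ p := hC
    _ = f t ^ (p - 1) * (C * f t) := by
        rw [Real.rpow_sub_one hft.ne']; field_simp

theorem one_conv_k_le_general (k l : ℝ → ℝ) (p₀ t₀ cbar : ℝ)
    -- (K0)
    (hk_int : ∀ S : ℝ, 0 < S → IntegrableOn k (Ioc 0 S))
    (hl_int : ∀ S : ℝ, 0 < S → IntegrableOn l (Ioc 0 S))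
    (hk_nonneg : ∀ t : ℝ, 0 < t → 0 ≤ k t)
    (hl_nonneg : ∀ t : ℝ, 0 < t → 0 ≤ l t)
    (hl_anti : AntitoneOn l (Ioi 0))
    (hkl : ∀ t : ℝ, 0 < t → ∫ s in (0:ℝ)..t, k (t - s) * l s = 1)
    -- (K1)
    (hp₀ : 1 < p₀)
    (hl_p : IntegrableOn (fun s => l s ^ p₀) (Ioo 0 t₀))
    (hK1 : ∀ t : ℝ, 0 < t → t ≤ t₀ →
      (1 / t) * ∫ s in (0:ℝ)..t, l s ^ p₀ ≤ cbar * l t ^ p₀) :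
    ∀ t : ℝ, 0 < t → t < t₀ →
      (∫ s in (0:ℝ)..t, k s) ≤ cbar * t * (∫ s in (0:ℝ)..t, l s)⁻¹ := by
  intro t ht htt₀
  have hk_ii : IntervalIntegrable k volume 0 t :=
    (intervalIntegrable_iff_integrableOn_Ioc_of_le ht.le).2 (hk_int t ht)
  have hl_ii : IntervalIntegrable l volume 0 t :=
    (intervalIntegrable_iff_integrableOn_Ioc_of_le ht.le).2 (hl_int t ht)
  have hlp_ii : IntervalIntegrable (fun s => l s ^ p₀) volume 0 t :=
    (intervalIntegrable_iff_integrableOn_Ioc_of_le ht.le).2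
      (hl_p.mono_set fun s hs => ⟨hs.1, hs.2.trans_lt htt₀⟩)
  have hl_anti' : AntitoneOn l (Ioc 0 t) := hl_anti.mono Ioc_subset_Ioi_self
  have hl_nonneg' : ∀ s ∈ Ioc 0 t, 0 ≤ l s := fun s hs => hl_nonneg s hs.1
  have hconv_ne : ∫ s in (0:ℝ)..t, k (t - s) * l s ≠ 0 := by rw [hkl t ht]; exact one_ne_zero
  have hK1_t : ∫ s in (0:ℝ)..t, l s ^ p₀ ≤ cbar * t * l t ^ p₀ := by
    have h := hK1 t ht htt₀.le
    rwa [one_div_mul_eq_div, div_le_iff₀ ht, mul_right_comm] at h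
  have hlt : 0 < l t := by
    refine (hl_nonneg t ht).lt_of_ne' fun h0 => ?_
    rw [h0, Real.zero_rpow (by linarith), mul_zero] at hK1_t
    exact hK1_t.not_gt (integral_rpow_pos_of_integral_mul_ne_zero ht.le (by linarith)
      hl_nonneg' hlp_ii hconv_ne)
  have hl_int_le : ∫ s in (0:ℝ)..t, l s ≤ cbar * t * l t :=
    integral_le_of_integral_rpow_le_of_antitoneOn ht.le hp₀.le hl_anti' hl_nonneg' hl_ii hlp_ii
      hlt hK1_t
  have hk_int_le : l t * ∫ s in (0:ℝ)..t, k s ≤ 1 :=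
    hkl t ht ▸ mul_integral_le_integral_comp_sub_mul_of_antitoneOn ht.le hl_anti'
      (fun s hs => hk_nonneg s hs.1) hk_ii (intervalIntegrable_of_integral_ne_zero hconv_ne)
  have hl_int_pos : 0 < ∫ s in (0:ℝ)..t, l s :=
    (mul_pos ht hlt).trans_le (mul_le_integral_of_antitoneOn ht.le hl_anti' hl_ii)
  calc ∫ s in (0:ℝ)..t, k s ≤ 1 / l t := (le_div_iff₀' hlt).2 hk_int_le
    _ ≤ cbar * t * (∫ s in (0:ℝ)..t, l s)⁻¹ := by
        rw [← div_eq_mul_inv, div_le_div_iff₀ hlt hl_int_pos]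
        linarith

/-- Lemma 2.5, second assertion: under (K0) and (K1) (with constants `p₀, t₀, c̄`),
`(1 * k)(t) = ∫₀ᵗ k ≤ c̄ t k₁(t)` for all `t ∈ (0, t₀)`, where `k₁(t) = (∫₀ᵗ l)⁻¹`. -/
theorem one_conv_k_le (k l : ℝ → ℝ) (p₀ t₀ cbar : ℝ)
    -- (K0)
    (hk_int : ∀ S : ℝ, 0 < S → IntegrableOn k (Ioc 0 S))
    (hl_int : ∀ S : ℝ, 0 < S → IntegrableOn l (Ioc 0 S))
    (hk_C1 : ContDiffOn ℝ 1 k (Ioi 0))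
    (hl_C1 : ContDiffOn ℝ 1 l (Ioi 0))
    (hk_nonneg : ∀ t : ℝ, 0 < t → 0 ≤ k t)
    (hl_nonneg : ∀ t : ℝ, 0 < t → 0 ≤ l t)
    (hk_anti : AntitoneOn k (Ioi 0))
    (hl_anti : AntitoneOn l (Ioi 0))
    (hk_conv : ConvexOn ℝ (Ioi 0) k)
    (hkl : ∀ t : ℝ, 0 < t → ∫ s in (0:ℝ)..t, k (t - s) * l s = 1)
    -- (K1)
    (hp₀ : 1 < p₀) (ht₀ : 0 < t₀) (hcbar : 1 < cbar)
    (hl_p : IntegrableOn (fun s => l s ^ p₀) (Ioo 0 t₀))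
    (hK1 : ∀ t : ℝ, 0 < t → t ≤ t₀ →
      (1 / t) * ∫ s in (0:ℝ)..t, l s ^ p₀ ≤ cbar * l t ^ p₀) :
    ∀ t : ℝ, 0 < t → t < t₀ →
      (∫ s in (0:ℝ)..t, k s) ≤ cbar * t * (∫ s in (0:ℝ)..t, l s)⁻¹ :=
  one_conv_k_le_general k l p₀ t₀ cbar hk_int hl_int hk_nonneg hl_nonneg hl_anti hkl hp₀ hl_p hK1
end

section
/- Assume (K0) and (K1). Then k₁(x·y) ≤ max{1, y^{−1}} · k₁(x) for all x, y > 0, where k₁(t) = ( ∫₀^t l(s) ds )^{−1}. -/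
open MeasureTheory Set intervalIntegral

/-!
`L(t) = ∫₀ᵗ l` is positive since `k * l = 1`, nondecreasing since `l ≥ 0`, and its average
`L(t) / t` is nonincreasing since `l` is (compare both pieces of `L(x) = L(a) + ∫ₐˣ l`
with `l(a)`). The first monotonicity gives the bound for `y ≥ 1`, the second for `y < 1`.
-/

theorem intervalIntegral_pos_of_integral_mul_ne_zero {g l : ℝ → ℝ} {a b : ℝ} (hab : a ≤ b)
    (hl : IntervalIntegrable l volume a b) (hl_nonneg : ∀ s ∈ Ioc a b, 0 ≤ l s)
    (hgl : ∫ s in a..b, g s * l s ≠ 0) : 0 < ∫ s in a..b, l s := by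
  have hl_ae : 0 ≤ᵐ[volume.restrict (Ioc a b)] l :=
    (ae_restrict_iff' measurableSet_Ioc).2 (ae_of_all _ hl_nonneg)
  refine lt_of_le_of_ne ?_ fun h => hgl ?_
  · rw [integral_of_le hab]
    exact setIntegral_nonneg measurableSet_Ioc hl_nonneg
  · have hl_zero := (integral_eq_zero_iff_of_le_of_nonneg_ae hab hl_ae hl).1 h.symm
    rw [integral_of_le hab]
    refine integral_eq_zero_of_ae ?_
    filter_upwards [hl_zero] with s hs
    simp [hs]

theorem AntitoneOn.mul_intervalIntegral_le {l : ℝ → ℝ} {a x : ℝ}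
    (hl_anti : AntitoneOn l (Ioc 0 x)) (ha : 0 < a) (hax : a ≤ x)
    (hl : IntervalIntegrable l volume 0 x) :
    a * ∫ s in (0:ℝ)..x, l s ≤ x * ∫ s in (0:ℝ)..a, l s := by
  have hl_left : IntervalIntegrable l volume 0 a :=
    hl.mono_set (uIcc_subset_uIcc_left (by simp [uIcc_of_le (ha.le.trans hax), ha.le, hax]))
  have hl_right : IntervalIntegrable l volume a x :=
    hl.mono_set (uIcc_subset_uIcc_right (by simp [uIcc_of_le (ha.le.trans hax), ha.le, hax]))
  have ha_mem : a ∈ Ioc 0 x := ⟨ha, hax⟩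
  have hlower : a * l a ≤ ∫ s in (0:ℝ)..a, l s := by
    simpa using integral_mono_on_of_le_Ioo ha.le intervalIntegrable_const hl_left
      fun s hs => hl_anti ⟨hs.1, hs.2.le.trans hax⟩ ha_mem hs.2.le
  have hupper : ∫ s in a..x, l s ≤ (x - a) * l a := by
    simpa using integral_mono_on_of_le_Ioo hax hl_right intervalIntegrable_const
      fun s hs => hl_anti ha_mem ⟨ha.trans hs.1, hs.2.le⟩ hs.1.le
  have hsplit := integral_add_adjacent_intervals hl_left hl_right
  nlinarith [mul_le_mul_of_nonneg_left hlower (sub_nonneg.2 hax),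
    mul_le_mul_of_nonneg_left hupper ha.le]

section AntitoneKernel

variable {l : ℝ → ℝ} (hl_int : ∀ S : ℝ, 0 < S → IntegrableOn l (Ioc 0 S))
  (hl_nonneg : ∀ t : ℝ, 0 < t → 0 ≤ l t) (hl_anti : AntitoneOn l (Ioi 0))
include hl_int hl_nonneg hl_anti

theorem intervalIntegral_le_max_mul_intervalIntegral_mul {x y : ℝ} (hx : 0 < x) (hy : 0 < y) :
    ∫ s in (0:ℝ)..x, l s ≤ max 1 y⁻¹ * ∫ s in (0:ℝ)..(x * y), l s := by
  have hl : ∀ t, 0 < t → IntervalIntegrable l volume 0 t := fun t ht =>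
    (intervalIntegrable_iff_integrableOn_Ioc_of_le ht.le).2 (hl_int t ht)
  have hxy : 0 < x * y := mul_pos hx hy
  have hLxy : 0 ≤ ∫ s in (0:ℝ)..(x * y), l s := by
    rw [integral_of_le hxy.le]
    exact setIntegral_nonneg measurableSet_Ioc fun s hs => hl_nonneg s hs.1
  rcases le_or_gt 1 y with hy1 | hy1
  · calc ∫ s in (0:ℝ)..x, l s ≤ ∫ s in (0:ℝ)..(x * y), l s :=
          integral_mono_interval le_rfl hx.le (le_mul_of_one_le_right hx.le hy1)
            ((ae_restrict_iff' measurableSet_Ioc).2 (ae_of_all _ fun s hs => hl_nonneg s hs.1))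
            (hl _ hxy)
      _ ≤ max 1 y⁻¹ * ∫ s in (0:ℝ)..(x * y), l s :=
          le_mul_of_one_le_left hLxy (le_max_left _ _)
  · have hscale := (hl_anti.mono Ioc_subset_Ioi_self).mul_intervalIntegral_le hxy
      (mul_le_of_le_one_right hx.le hy1.le) (hl x hx)
    calc ∫ s in (0:ℝ)..x, l s ≤ y⁻¹ * ∫ s in (0:ℝ)..(x * y), l s := by
          rw [le_inv_mul_iff₀ hy]
          exact le_of_mul_le_mul_left (by rw [← mul_assoc]; exact hscale) hx
      _ ≤ max 1 y⁻¹ * ∫ s in (0:ℝ)..(x * y), l s :=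
          mul_le_mul_of_nonneg_right (le_max_right _ _) hLxy

end AntitoneKernel

theorem k_one_scaling_general (k l : ℝ → ℝ)
    -- (K0)
    (hl_int : ∀ S : ℝ, 0 < S → IntegrableOn l (Ioc 0 S))
    (hl_nonneg : ∀ t : ℝ, 0 < t → 0 ≤ l t)
    (hl_anti : AntitoneOn l (Ioi 0))
    (hkl : ∀ t : ℝ, 0 < t → ∫ s in (0:ℝ)..t, k (t - s) * l s = 1) :
    ∀ x y : ℝ, 0 < x → 0 < y →
      (∫ s in (0:ℝ)..(x * y), l s)⁻¹ ≤ max 1 y⁻¹ * (∫ s in (0:ℝ)..x, l s)⁻¹ := by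
  have hL_pos : ∀ t, 0 < t → 0 < ∫ s in (0:ℝ)..t, l s := fun t ht =>
    intervalIntegral_pos_of_integral_mul_ne_zero ht.le
      ((intervalIntegrable_iff_integrableOn_Ioc_of_le ht.le).2 (hl_int t ht))
      (fun s hs => hl_nonneg s hs.1) (by rw [hkl t ht]; exact one_ne_zero)
  intro x y hx hy
  have hscale := intervalIntegral_le_max_mul_intervalIntegral_mul hl_int hl_nonneg hl_anti hx hy
  rw [← div_eq_mul_inv, le_div_iff₀ (hL_pos x hx), inv_mul_le_iff₀ (hL_pos _ (mul_pos hx hy)),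
    mul_comm]
  exact hscale

/-- Lemma 2.6: under (K0) and (K1), `k₁(x y) ≤ max{1, y⁻¹} k₁(x)` for all
`x, y > 0`, where `k₁(t) = (∫₀ᵗ l)⁻¹`. -/
theorem k_one_scaling (k l : ℝ → ℝ) (p₀ t₀ cbar : ℝ)
    -- (K0)
    (hk_int : ∀ S : ℝ, 0 < S → IntegrableOn k (Ioc 0 S))
    (hl_int : ∀ S : ℝ, 0 < S → IntegrableOn l (Ioc 0 S))
    (hk_C1 : ContDiffOn ℝ 1 k (Ioi 0))
    (hl_C1 : ContDiffOn ℝ 1 l (Ioi 0))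
    (hk_nonneg : ∀ t : ℝ, 0 < t → 0 ≤ k t)
    (hl_nonneg : ∀ t : ℝ, 0 < t → 0 ≤ l t)
    (hk_anti : AntitoneOn k (Ioi 0))
    (hl_anti : AntitoneOn l (Ioi 0))
    (hk_conv : ConvexOn ℝ (Ioi 0) k)
    (hkl : ∀ t : ℝ, 0 < t → ∫ s in (0:ℝ)..t, k (t - s) * l s = 1)
    -- (K1)
    (hp₀ : 1 < p₀) (ht₀ : 0 < t₀) (hcbar : 1 < cbar)
    (hl_p : IntegrableOn (fun s => l s ^ p₀) (Ioo 0 t₀))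
    (hK1 : ∀ t : ℝ, 0 < t → t ≤ t₀ →
      (1 / t) * ∫ s in (0:ℝ)..t, l s ^ p₀ ≤ cbar * l t ^ p₀) :
    ∀ x y : ℝ, 0 < x → 0 < y →
      (∫ s in (0:ℝ)..(x * y), l s)⁻¹ ≤ max 1 y⁻¹ * (∫ s in (0:ℝ)..x, l s)⁻¹ :=
  k_one_scaling_general k l hl_int hl_nonneg hl_anti hkl
end

section
/- Let T > 0, let k : [0,T] → ℝ be absolutely continuous, i.e. k(t) = k(0) + ∫₀^t k̇(s) ds with k̇ ∈ L₁((0,T)), let H ∈ C¹(ℝ) and let u : [0,T] → ℝ be continuous. Then for almost every t ∈ (0,T) the functions k*u and k*(H∘u) are differentiable at t and H'(u(t)) · (d/dt)(k*u)(t) = (d/dt)(k*(H∘u))(t) + ( H'(u(t))·u(t) − H(u(t)) )·k(t) + ∫₀^t ( H(u(t−s)) − H(u(t)) − H'(u(t))·[u(t−s) − u(t)] ) · (−k̇(s)) ds. -/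
open MeasureTheory Set intervalIntegral Filter
open scoped BoundedContinuousFunction

/-!
Write `k = k 0 + ∫₀^· k̇`. Swapping the order of integration over the triangle `r + s ≤ τ` gives
`(k * v)(τ) = k(0) V(τ) + ∫₀^τ k̇(r) V(τ - r) dr`, with `V` the primitive of `v` from `0`.
Freezing `V` at `V(0) = 0` on the negative half-line, the upper limit `τ` can be replaced by `T`
and the integrand becomes Lipschitz in `τ`, so it may be differentiated under the integral sign:
`(k * v)'(t) = k(t) v(t) + ∫₀^t (v(t - s) - v(t)) k̇(s) ds` for `t ∈ (0, T)` and any `v` continuous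
on `[0, T]`. With `v = u` and `v = H ∘ u` the identity is linear algebra.
-/

lemma integral_eq_integral_of_eq_zero_on_Ioc {f : ℝ → ℝ} {a b c : ℝ} (hab : a ≤ b) (hbc : b ≤ c)
    (hf : IntervalIntegrable f volume a c) (hzero : ∀ x ∈ Ioc b c, f x = 0) :
    ∫ x in a..c, f x = ∫ x in a..b, f x := by
  have hb : b ∈ uIcc a c := mem_uIcc_of_le hab hbc
  rw [← integral_add_adjacent_intervals (hf.mono_set (uIcc_subset_uIcc left_mem_uIcc hb))
      (hf.mono_set (uIcc_subset_uIcc hb right_mem_uIcc)),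
    integral_zero_ae (a := b) (b := c)
      (Eventually.of_forall fun x hx => hzero x (by rwa [uIoc_of_le hbc] at hx)),
    add_zero]

lemma setIntegral_Ioc_indicator_Iic_sub {f : ℝ → ℝ} {τ s : ℝ} (hs : s ∈ Icc 0 τ) :
    ∫ r in Ioc 0 τ, (Iic (τ - s)).indicator f r = ∫ r in 0..τ - s, f r := by
  rw [setIntegral_indicator measurableSet_Iic, Ioc_inter_Iic,
    min_eq_right (by linarith [hs.1]), integral_of_le (by linarith [hs.2])]

lemma sub_mem_Icc_of_mem_uIcc {T τ s : ℝ} (hτ : τ ∈ Icc 0 T) (hs : s ∈ uIcc 0 τ) :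
    τ - s ∈ Icc 0 T := by
  rw [uIcc_of_le hτ.1] at hs
  constructor <;> linarith [hs.1, hs.2, hτ.2]

theorem integral_primitive_mul_swap {f g : ℝ → ℝ} {τ : ℝ} (hτ : 0 ≤ τ)
    (hf : IntervalIntegrable f volume 0 τ) (hg : IntervalIntegrable g volume 0 τ) :
    ∫ s in 0..τ, (∫ r in 0..τ - s, f r) * g s = ∫ r in 0..τ, f r * ∫ s in 0..τ - r, g s := by
  set F : ℝ × ℝ → ℝ := {p | p.1 + p.2 ≤ τ}.indicator fun p => g p.1 * f p.2
  have hF_int : Integrable F ((volume.restrict (Ioc 0 τ)).prod (volume.restrict (Ioc 0 τ))) :=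
    (((intervalIntegrable_iff_integrableOn_Ioc_of_le hτ).1 hg).mul_prod
      ((intervalIntegrable_iff_integrableOn_Ioc_of_le hτ).1 hf)).indicator
      (measurableSet_le (measurable_fst.add measurable_snd) measurable_const)
  have hF_eq (s r : ℝ) : F (s, r) = (Iic (τ - s)).indicator f r * g s ∧
      F (s, r) = f r * (Iic (τ - r)).indicator g s := by
    simp only [F, indicator_apply, mem_ofPred_eq, mem_Iic]
    constructor <;> split_ifs <;> first | (exfalso; linarith) | ring
  calc ∫ s in 0..τ, (∫ r in 0..τ - s, f r) * g s
      = ∫ s in Ioc 0 τ, ∫ r in Ioc 0 τ, F (s, r) := by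
        rw [integral_of_le hτ]
        refine setIntegral_congr_fun measurableSet_Ioc fun s hs => ?_
        simp only [(hF_eq s _).1, MeasureTheory.integral_mul_const,
          setIntegral_Ioc_indicator_Iic_sub (Ioc_subset_Icc_self hs)]
    _ = ∫ r in Ioc 0 τ, ∫ s in Ioc 0 τ, F (s, r) := integral_integral_swap hF_int
    _ = ∫ r in 0..τ, f r * ∫ s in 0..τ - r, g s := by
        rw [integral_of_le hτ]
        refine setIntegral_congr_fun measurableSet_Ioc fun r hr => ?_
        simp only [(hF_eq _ r).2, MeasureTheory.integral_const_mul,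
          setIntegral_Ioc_indicator_Iic_sub (Ioc_subset_Icc_self hr)]

lemma lipschitzWith_primitive (g : ℝ →ᵇ ℝ) : LipschitzWith ‖g‖₊ fun x => ∫ s in 0..x, g s := by
  have hG (x : ℝ) := (g.continuous.integral_hasStrictDerivAt 0 x).hasDerivAt
  refine lipschitzWith_of_nnnorm_deriv_le (fun x => (hG x).differentiableAt) fun x => ?_
  rw [(hG x).deriv]
  exact g.nnnorm_coe_le_nnnorm x

theorem hasDerivAt_integral_mul_primitive {w : ℝ → ℝ} (g : ℝ →ᵇ ℝ) {T t : ℝ}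
    (hw : IntervalIntegrable w volume 0 T) (ht : t ∈ Ioo 0 T) :
    HasDerivAt (fun τ => ∫ r in 0..τ, w r * ∫ s in 0..τ - r, g s)
      (∫ r in 0..t, w r * g (t - r)) t := by
  set G : ℝ → ℝ := fun x => ∫ s in 0..x, g s
  set Gp : ℝ → ℝ := fun x => G (max x 0)
  have hGp_lip : LipschitzWith ‖g‖₊ Gp := by
    rw [← mul_one ‖g‖₊]
    exact (lipschitzWith_primitive g).comp (LipschitzWith.id.max_const 0)
  have hGp_deriv (x : ℝ) (hx : x ≠ 0) : HasDerivAt Gp ((Ici 0).indicator g x) x := by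
    rcases hx.lt_or_gt with hx | hx
    · rw [indicator_of_notMem (show x ∉ Ici 0 from not_le.2 hx)]
      refine (hasDerivAt_const x 0).congr_of_eventuallyEq ?_
      filter_upwards [Iio_mem_nhds hx] with y (hy : y < 0)
      simp [Gp, G, max_eq_right (le_of_lt hy)]
    · rw [indicator_of_mem (show x ∈ Ici 0 from le_of_lt hx)]
      refine (g.continuous.integral_hasStrictDerivAt 0 x).hasDerivAt.congr_of_eventuallyEq ?_
      filter_upwards [Ioi_mem_nhds hx] with y (hy : 0 < y)
      simp [Gp, G, max_eq_left (le_of_lt hy)]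
  have hGp_shift (τ : ℝ) : Continuous fun r => Gp (τ - r) :=
    hGp_lip.continuous.comp (continuous_const.sub continuous_id)
  have hF_lip (r : ℝ) : LipschitzWith (Real.nnabs (w r * ‖g‖)) fun τ => w r * Gp (τ - r) := by
    refine LipschitzWith.of_dist_le_mul fun x y => ?_
    have := hGp_lip.dist_le_mul (x - r) (y - r)
    simp only [Real.dist_eq, sub_sub_sub_cancel_right, Real.coe_nnabs, abs_mul, abs_norm,
      coe_nnnorm] at this ⊢
    rw [← mul_sub, abs_mul, mul_assoc]
    exact mul_le_mul_of_nonneg_left this (abs_nonneg _)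
  have hw' := hw.def'.aestronglyMeasurable
  obtain ⟨hF'_int, hderiv⟩ := hasDerivAt_integral_of_dominated_loc_of_lip (μ := volume)
    (F := fun τ r => w r * Gp (τ - r)) (F' := fun r => w r * (Ici 0).indicator g (t - r))
    (bound := fun r => w r * ‖g‖) univ_mem
    (Eventually.of_forall fun τ => hw'.mul (hGp_shift τ).aestronglyMeasurable)
    (hw.mul_continuousOn (hGp_shift t).continuousOn)
    (hw'.mul ((g.continuous.measurable.indicator measurableSet_Ici).comp
      (measurable_const.sub measurable_id)).aestronglyMeasurable)
    (Eventually.of_forall fun r _ => (hF_lip r).lipschitzOnWith) (hw.mul_const _)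
    ((volume.ae_ne t).mono fun r hr _ =>
      ((hGp_deriv (t - r) (sub_ne_zero.2 hr.symm)).comp_sub_const t r).const_mul (w r))
  have hvalue : ∫ r in 0..T, w r * (Ici 0).indicator g (t - r) = ∫ r in 0..t, w r * g (t - r) := by
    rw [integral_eq_integral_of_eq_zero_on_Ioc ht.1.le ht.2.le hF'_int fun r hr => by
      simp [indicator_of_notMem (show t - r ∉ Ici 0 from by simp; linarith [hr.1])]]
    refine integral_congr fun r hr => ?_
    rw [uIcc_of_le ht.1.le] at hr
    simp [indicator_of_mem (show t - r ∈ Ici 0 from by simp; linarith [hr.2])]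
  rw [← hvalue]
  refine hderiv.congr_of_eventuallyEq ?_
  filter_upwards [Ioo_mem_nhds ht.1 ht.2] with τ hτ
  rw [integral_eq_integral_of_eq_zero_on_Ioc hτ.1.le hτ.2.le
    (hw.mul_continuousOn (hGp_shift τ).continuousOn)
    fun r hr => by simp [Gp, G, max_eq_right (show τ - r ≤ 0 by linarith [hr.1])]]
  refine integral_congr fun r hr => ?_
  rw [uIcc_of_le hτ.1.le] at hr
  simp [Gp, G, max_eq_left (show 0 ≤ τ - r by linarith [hr.2])]

noncomputable def halfLineConv (f g : ℝ → ℝ) (t : ℝ) : ℝ := ∫ s in 0..t, f (t - s) * g s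

theorem halfLineConv_eq_add_integral_mul_primitive {k w g : ℝ → ℝ} {T τ : ℝ}
    (hw : IntervalIntegrable w volume 0 T) (hk : ∀ x ∈ Icc 0 T, k x = k 0 + ∫ s in 0..x, w s)
    (hg : IntervalIntegrable g volume 0 τ) (hτ : τ ∈ Icc 0 T) :
    halfLineConv k g τ = k 0 * (∫ s in 0..τ, g s) + ∫ r in 0..τ, w r * ∫ s in 0..τ - r, g s := by
  have hW : ContinuousOn (fun s => ∫ r in 0..τ - s, w r) (uIcc 0 τ) :=
    (continuousOn_primitive_interval' hw left_mem_uIcc).comp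
      (continuousOn_const.sub continuousOn_id) fun s hs => by
        rw [uIcc_of_le (hτ.1.trans hτ.2)]
        exact sub_mem_Icc_of_mem_uIcc hτ hs
  calc halfLineConv k g τ = ∫ s in 0..τ, (k 0 * g s + (∫ r in 0..τ - s, w r) * g s) :=
        integral_congr fun s hs => by simp only [hk _ (sub_mem_Icc_of_mem_uIcc hτ hs)]; ring
    _ = k 0 * (∫ s in 0..τ, g s) + ∫ s in 0..τ, (∫ r in 0..τ - s, w r) * g s := by
        rw [integral_add (hg.const_mul _) (hg.continuousOn_mul hW),
          intervalIntegral.integral_const_mul]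
    _ = _ := by
        rw [integral_primitive_mul_swap hτ.1
          (hw.mono_set (uIcc_subset_uIcc_left (mem_uIcc_of_le hτ.1 hτ.2))) hg]

theorem hasDerivAt_halfLineConv_of_bounded {k w : ℝ → ℝ} (g : ℝ →ᵇ ℝ) {T t : ℝ}
    (hw : IntervalIntegrable w volume 0 T) (hk : ∀ x ∈ Icc 0 T, k x = k 0 + ∫ s in 0..x, w s)
    (ht : t ∈ Ioo 0 T) :
    HasDerivAt (halfLineConv k g) (k t * g t + ∫ s in 0..t, (g (t - s) - g t) * w s) t := by
  have hderiv := ((g.continuous.integral_hasStrictDerivAt 0 t).hasDerivAt.const_mul (k 0)).add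
    (hasDerivAt_integral_mul_primitive g hw ht)
  have hw_t : IntervalIntegrable w volume 0 t :=
    hw.mono_set (uIcc_subset_uIcc_left (mem_uIcc_of_le ht.1.le ht.2.le))
  have hvalue : k 0 * g t + ∫ r in 0..t, w r * g (t - r)
      = k t * g t + ∫ s in 0..t, (g (t - s) - g t) * w s := by
    have hg_shift : IntervalIntegrable (fun s => w s * g (t - s)) volume 0 t :=
      hw_t.mul_continuousOn (g.continuous.comp (continuous_const.sub continuous_id)).continuousOn
    rw [hk t (Ioo_subset_Icc_self ht), show (fun s => (g (t - s) - g t) * w s)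
        = fun s => w s * g (t - s) - g t * w s by ext; ring,
      integral_sub hg_shift (hw_t.const_mul _), intervalIntegral.integral_const_mul]
    ring
  rw [← hvalue]
  refine hderiv.congr_of_eventuallyEq ?_
  filter_upwards [Ioo_mem_nhds ht.1 ht.2] with τ hτ
  exact halfLineConv_eq_add_integral_mul_primitive hw hk (g.continuous.intervalIntegrable 0 τ)
    (Ioo_subset_Icc_self hτ)

theorem hasDerivAt_halfLineConv {k w g : ℝ → ℝ} {T t : ℝ}
    (hw : IntervalIntegrable w volume 0 T) (hk : ∀ x ∈ Icc 0 T, k x = k 0 + ∫ s in 0..x, w s)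
    (hg : ContinuousOn g (Icc 0 T)) (ht : t ∈ Ioo 0 T) :
    HasDerivAt (halfLineConv k g) (k t * g t + ∫ s in 0..t, (g (t - s) - g t) * w s) t := by
  have hT : 0 ≤ T := ht.1.le.trans ht.2.le
  let gExt : ℝ →ᵇ ℝ :=
    (BoundedContinuousFunction.mkOfCompact ⟨(Icc 0 T).domRestrict g, hg.domRestrict⟩)
      |>.compContinuous ⟨projIcc 0 T hT, continuous_projIcc⟩
  have hgExt {x : ℝ} (hx : x ∈ Icc 0 T) : gExt x = g x :=
    congrArg g (congrArg Subtype.val (projIcc_of_mem hT hx))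
  have hderiv := hasDerivAt_halfLineConv_of_bounded gExt hw hk ht
  rw [hgExt (Ioo_subset_Icc_self ht), integral_congr fun s hs => by
    rw [hgExt (sub_mem_Icc_of_mem_uIcc (Ioo_subset_Icc_self ht) hs)]] at hderiv
  refine hderiv.congr_of_eventuallyEq ?_
  filter_upwards [Ioo_mem_nhds ht.1 ht.2] with τ hτ
  exact integral_congr fun s hs => by
    rw [hgExt (uIcc_subset_Icc (left_mem_Icc.2 hT) (Ioo_subset_Icc_self hτ) hs)]

theorem fundamental_identity_general (T : ℝ)
    (k kdot u H H' : ℝ → ℝ)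
    (hkdot : IntegrableOn kdot (Ioo 0 T))
    (hk : ∀ t ∈ Icc (0:ℝ) T, k t = k 0 + ∫ s in (0:ℝ)..t, kdot s)
    (hu : ContinuousOn u (Icc 0 T))
    (hH : ∀ y : ℝ, HasDerivAt H (H' y) y) :
    ∀ᵐ t : ℝ, t ∈ Ioo 0 T →
      ∃ d₁ d₂ : ℝ,
        HasDerivAt (fun τ => ∫ s in (0:ℝ)..τ, k (τ - s) * u s) d₁ t ∧
        HasDerivAt (fun τ => ∫ s in (0:ℝ)..τ, k (τ - s) * H (u s)) d₂ t ∧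
        H' (u t) * d₁ =
          d₂ + (H' (u t) * u t - H (u t)) * k t +
            ∫ s in (0:ℝ)..t,
              (H (u (t - s)) - H (u t) - H' (u t) * (u (t - s) - u t)) * (-kdot s) := by
  refine Eventually.of_forall fun t ht => ?_
  have hw : IntervalIntegrable kdot volume 0 T :=
    (intervalIntegrable_iff_integrableOn_Ioo_of_le (ht.1.trans ht.2).le).2 hkdot
  have hHu : ContinuousOn (H ∘ u) (Icc 0 T) :=
    (continuous_iff_continuousAt.2 fun y => (hH y).continuousAt).comp_continuousOn hu
  refine ⟨_, _, hasDerivAt_halfLineConv hw hk hu ht, hasDerivAt_halfLineConv hw hk hHu ht, ?_⟩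
  have hint {v : ℝ → ℝ} (hv : ContinuousOn v (Icc 0 T)) :
      IntervalIntegrable (fun s => (v (t - s) - v t) * kdot s) volume 0 t :=
    (hw.mono_set (uIcc_subset_uIcc_left (mem_uIcc_of_le ht.1.le ht.2.le))).continuousOn_mul
      ((hv.comp (continuousOn_const.sub continuousOn_id) fun _ hs =>
        sub_mem_Icc_of_mem_uIcc (Ioo_subset_Icc_self ht) hs).sub continuousOn_const)
  have hremainder : ∫ s in 0..t, (H (u (t - s)) - H (u t) - H' (u t) * (u (t - s) - u t)) * -kdot s
      = H' (u t) * (∫ s in 0..t, (u (t - s) - u t) * kdot s)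
        - ∫ s in 0..t, (H (u (t - s)) - H (u t)) * kdot s := by
    rw [← intervalIntegral.integral_const_mul,
      ← integral_sub ((hint hu).const_mul _) (hint (v := fun x => H (u x)) hHu)]
    exact integral_congr fun s _ => by ring
  rw [hremainder]
  ring

/-- The fundamental identity (18): for `k ∈ H¹₁([0,T])`, `H ∈ C¹(ℝ)` and `u`
continuous, for a.e. `t ∈ (0,T)` the convolutions `k*u` and `k*(H∘u)` are
differentiable at `t` and
`H'(u(t)) (d/dt)(k*u)(t) = (d/dt)(k*(H∘u))(t) + (H'(u(t)) u(t) − H(u(t))) k(t)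
 + ∫₀ᵗ ( H(u(t−s)) − H(u(t)) − H'(u(t))(u(t−s) − u(t)) ) (−k̇(s)) ds`. -/
theorem fundamental_identity (T : ℝ) (hT : 0 < T)
    (k kdot u H H' : ℝ → ℝ)
    (hkdot : IntegrableOn kdot (Ioo 0 T))
    (hk : ∀ t ∈ Icc (0:ℝ) T, k t = k 0 + ∫ s in (0:ℝ)..t, kdot s)
    (hu : ContinuousOn u (Icc 0 T))
    (hH : ∀ y : ℝ, HasDerivAt H (H' y) y)
    (hH' : Continuous H') :
    ∀ᵐ t : ℝ, t ∈ Ioo 0 T →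
      ∃ d₁ d₂ : ℝ,
        HasDerivAt (fun τ => ∫ s in (0:ℝ)..τ, k (τ - s) * u s) d₁ t ∧
        HasDerivAt (fun τ => ∫ s in (0:ℝ)..τ, k (τ - s) * H (u s)) d₂ t ∧
        H' (u t) * d₁ =
          d₂ + (H' (u t) * u t - H (u t)) * k t +
            ∫ s in (0:ℝ)..t,
              (H (u (t - s)) - H (u t) - H' (u t) * (u (t - s) - u t)) * (-kdot s) :=
  fundamental_identity_general T k kdot u H H' hkdot hk hu hH
end

section
/- Let α ∈ (0,1) and γ ≥ 0, and define for t > 0: k(t) = e^{−γt}·t^{−α}/Γ(1−α) and l(t) = e^{−γt}·t^{α−1}/Γ(α) + γ·∫₀^t e^{−γτ}·τ^{α−1}/Γ(α) dτ. Then (k*l)(t) = ∫₀^t k(t−s)·l(s) ds = 1 for every t > 0. -/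
open MeasureTheory Set intervalIntegral Real

/-!
With `g(t) = e^{-γt} t^{α-1}/Γ(α)` one has `l = g + γ (1 * g)`, and the Beta integral
`∫₀ᵗ s^{α-1} (t-s)^{-α} ds = Γ(α) Γ(1-α)` gives `k * g = e^{-γt}`. Fubini on the
triangle `0 < τ ≤ s ≤ t` shows `k * (1 * g) = 1 * (k * g)`, hence
`k * l = e^{-γt} + γ ∫₀ᵗ e^{-γu} du = 1`.
-/

theorem intervalIntegrable_rpow_mul_rpow_sub {a b t : ℝ} (ha : -1 < a) (hb : -1 < b)
    (ht : 0 < t) : IntervalIntegrable (fun s => s ^ a * (t - s) ^ b) volume 0 t := by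
  have hleft : IntervalIntegrable (fun s => s ^ a * (t - s) ^ b) volume 0 (t / 2) := by
    refine (intervalIntegrable_rpow' ha).mul_continuousOn
      ((continuous_const.sub continuous_id).continuousOn.rpow_const fun s hs => ?_)
    rw [uIcc_of_le (by positivity)] at hs
    exact Or.inl (show (0 : ℝ) < t - s by linarith [hs.2]).ne'
  have hright : IntervalIntegrable (fun s => s ^ a * (t - s) ^ b) volume (t / 2) t := by
    have hsing := (intervalIntegrable_rpow' (a := 0) (b := t / 2) hb).comp_sub_left t
    rw [sub_zero, sub_half] at hsing
    refine hsing.symm.continuousOn_mul (continuous_id.continuousOn.rpow_const fun s hs => ?_)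
    rw [uIcc_of_le (by linarith)] at hs
    exact Or.inl (by linarith [hs.1] : (0 : ℝ) < s).ne'
  exact hleft.trans hright

theorem integral_rpow_mul_rpow_sub {a b t : ℝ} (ha : 0 < a) (hb : 0 < b) (ht : 0 < t) :
    ∫ s in 0..t, s ^ (a - 1) * (t - s) ^ (b - 1) =
      t ^ (a + b - 1) * (Gamma a * Gamma b / Gamma (a + b)) := by
  have hbeta := Complex.Gamma_mul_Gamma_eq_betaIntegral (s := a) (t := b)
    (by simpa using ha) (by simpa using hb)
  have hΓ : Complex.Gamma ((a : ℂ) + b) ≠ 0 := by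
    rw [← Complex.ofReal_add, Complex.Gamma_ofReal]
    exact_mod_cast (Gamma_pos_of_pos (add_pos ha hb)).ne'
  have hB : Complex.betaIntegral a b =
      Complex.Gamma a * Complex.Gamma b / Complex.Gamma (a + b) :=
    eq_div_of_mul_eq hΓ (by rw [hbeta, mul_comm])
  have hcast : ((∫ s in 0..t, s ^ (a - 1) * (t - s) ^ (b - 1) : ℝ) : ℂ) =
      ∫ s in 0..t, (s : ℂ) ^ ((a : ℂ) - 1) * ((t : ℂ) - s) ^ ((b : ℂ) - 1) := by
    rw [← intervalIntegral.integral_ofReal]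
    refine integral_congr fun s hs => ?_
    rw [uIcc_of_le ht.le] at hs
    push_cast
    rw [Complex.ofReal_cpow hs.1, Complex.ofReal_cpow (sub_nonneg.2 hs.2)]
    push_cast
    rfl
  apply Complex.ofReal_injective
  rw [hcast, Complex.betaIntegral_scaled a b ht, hB, Complex.ofReal_mul,
    Complex.ofReal_cpow ht.le, Complex.ofReal_div, Complex.ofReal_mul,
    ← Complex.Gamma_ofReal, ← Complex.Gamma_ofReal, ← Complex.Gamma_ofReal]
  push_cast
  rfl

theorem mul_integral_exp_neg_mul (γ a b : ℝ) :
    γ * ∫ u in a..b, exp (-γ * u) = exp (-γ * a) - exp (-γ * b) := by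
  have hderiv (u : ℝ) : HasDerivAt (fun u => -exp (-γ * u)) (γ * exp (-γ * u)) u := by
    have := (((hasDerivAt_id u).const_mul (-γ)).exp).fun_neg
    simp only [id, mul_one, mul_neg, neg_neg] at this
    rwa [mul_comm] at this
  rw [← intervalIntegral.integral_const_mul, integral_eq_sub_of_hasDerivAt (fun u _ => hderiv u)
    ((by fun_prop : Continuous fun u => γ * exp (-γ * u)).intervalIntegrable a b)]
  ring

def triangle (t : ℝ) : Set (ℝ × ℝ) := {p | 0 < p.2 ∧ p.2 ≤ p.1 ∧ p.1 ≤ t}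

theorem measurableSet_triangle (t : ℝ) : MeasurableSet (triangle t) :=
  (measurableSet_lt measurable_const measurable_snd).inter
    ((measurableSet_le measurable_snd measurable_fst).inter
      (measurableSet_le measurable_fst measurable_const))

theorem triangle_subset_Icc_prod_Icc (t : ℝ) : triangle t ⊆ Icc 0 t ×ˢ Icc 0 t :=
  fun _ ⟨h0, hyx, hxt⟩ => ⟨⟨h0.le.trans hyx, hxt⟩, ⟨h0.le, hyx.trans hxt⟩⟩

theorem integral_integral_swap_triangle {t : ℝ} (ht : 0 ≤ t) {F : ℝ × ℝ → ℝ}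
    (hF : IntegrableOn F (triangle t)) :
    ∫ x in 0..t, ∫ y in 0..x, F (x, y) = ∫ y in 0..t, ∫ x in y..t, F (x, y) := by
  have hint : Integrable ((triangle t).indicator F) (volume.prod volume) := by
    rw [← Measure.volume_eq_prod]
    exact (integrable_indicator_iff (measurableSet_triangle t)).2 hF
  have row (x : ℝ) : ∫ y, (triangle t).indicator F (x, y) =
      (Ioc 0 t).indicator (fun x => ∫ y in 0..x, F (x, y)) x := by
    by_cases hx : x ∈ Ioc 0 t
    · rw [indicator_of_mem hx, integral_of_le hx.1.le,
        ← MeasureTheory.integral_indicator measurableSet_Ioc]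
      congr 1 with y
      simp only [triangle, indicator_apply, mem_ofPred_eq, mem_Ioc]
      grind
    · rw [indicator_of_notMem hx, ← integral_zero ℝ ℝ]
      congr 1 with y
      simp only [triangle, indicator_apply, mem_ofPred_eq, mem_Ioc] at hx ⊢
      grind
  have col (y : ℝ) : ∫ x, (triangle t).indicator F (x, y) =
      (Ioc 0 t).indicator (fun y => ∫ x in y..t, F (x, y)) y := by
    by_cases hy : y ∈ Ioc 0 t
    · rw [indicator_of_mem hy, integral_of_le hy.2, ← integral_Icc_eq_integral_Ioc,
        ← MeasureTheory.integral_indicator measurableSet_Icc]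
      congr 1 with x
      simp only [triangle, indicator_apply, mem_ofPred_eq, mem_Icc]
      grind
    · rw [indicator_of_notMem hy, ← integral_zero ℝ ℝ]
      congr 1 with x
      simp only [triangle, indicator_apply, mem_ofPred_eq, mem_Ioc] at hy ⊢
      grind
  rw [integral_of_le ht, integral_of_le ht, ← MeasureTheory.integral_indicator measurableSet_Ioc,
    ← MeasureTheory.integral_indicator measurableSet_Ioc]
  simp_rw [← row, ← col]
  rw [← integral_prod _ hint, integral_prod_symm _ hint]

section Convolution

variable {f h : ℝ → ℝ} {t : ℝ}

theorem integrableOn_triangle_comp_sub_left_mul (ht : 0 ≤ t)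
    (hf : IntervalIntegrable f volume 0 t) (hh : IntervalIntegrable h volume 0 t) :
    IntegrableOn (fun p : ℝ × ℝ => f (t - p.1) * h p.2) (triangle t) := by
  have hf' : IntegrableOn (fun x => f (t - x)) (Icc 0 t) := by
    have := hf.comp_sub_left t
    rw [sub_zero, sub_self] at this
    exact (intervalIntegrable_iff_integrableOn_Icc_of_le ht).1 this.symm
  have hh' := (intervalIntegrable_iff_integrableOn_Icc_of_le ht).1 hh
  refine IntegrableOn.mono_set ?_ (triangle_subset_Icc_prod_Icc t)
  rw [IntegrableOn, Measure.volume_eq_prod, ← Measure.prod_restrict]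
  exact hf'.mul_prod hh'

theorem integrableOn_triangle_comp_sub_mul (ht : 0 ≤ t)
    (hf : IntervalIntegrable f volume 0 t) (hh : IntervalIntegrable h volume 0 t) :
    IntegrableOn (fun p : ℝ × ℝ => f (p.1 - p.2) * h p.2) (triangle t) := by
  rw [intervalIntegrable_iff_integrableOn_Icc_of_le ht,
    ← integrable_indicator_iff measurableSet_Icc] at hf hh
  have := (hh.convolution_integrand (ContinuousLinearMap.mul ℝ ℝ) hf).integrableOn
    (s := triangle t)
  rw [← Measure.volume_eq_prod] at this
  refine this.congr_fun (fun p ⟨h0, hyx, hxt⟩ => ?_) (measurableSet_triangle t)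
  have hy : p.2 ∈ Icc 0 t := ⟨h0.le, hyx.trans hxt⟩
  have hxy : p.1 - p.2 ∈ Icc 0 t := ⟨sub_nonneg.2 hyx, by linarith⟩
  dsimp only
  rw [ContinuousLinearMap.mul_apply', indicator_of_mem hy, indicator_of_mem hxy, mul_comm]

theorem integral_mul_primitive_eq_primitive_convolution (ht : 0 ≤ t)
    (hf : IntervalIntegrable f volume 0 t) (hh : IntervalIntegrable h volume 0 t) :
    ∫ s in 0..t, f (t - s) * ∫ τ in 0..s, h τ =
      ∫ u in 0..t, ∫ τ in 0..u, f (u - τ) * h τ := by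
  calc ∫ s in 0..t, f (t - s) * ∫ τ in 0..s, h τ
      = ∫ s in 0..t, ∫ τ in 0..s, f (t - s) * h τ := by
        simp_rw [intervalIntegral.integral_const_mul]
    _ = ∫ τ in 0..t, ∫ s in τ..t, f (t - s) * h τ :=
        integral_integral_swap_triangle ht (integrableOn_triangle_comp_sub_left_mul ht hf hh)
    _ = ∫ τ in 0..t, (∫ v in 0..t - τ, f v) * h τ := by
        simp_rw [intervalIntegral.integral_mul_const, integral_comp_sub_left (fun v => f v) t,
          sub_self]
    _ = ∫ τ in 0..t, ∫ u in τ..t, f (u - τ) * h τ := by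
        simp_rw [intervalIntegral.integral_mul_const, integral_comp_sub_right (fun v => f v),
          sub_self]
    _ = ∫ u in 0..t, ∫ τ in 0..u, f (u - τ) * h τ :=
        (integral_integral_swap_triangle ht (integrableOn_triangle_comp_sub_mul ht hf hh)).symm

theorem integral_convolution_add_mul_primitive_eq_one {γ : ℝ} (ht : 0 < t)
    (hf : IntervalIntegrable f volume 0 t) (hh : IntervalIntegrable h volume 0 t)
    (hfh : IntervalIntegrable (fun s => f (t - s) * h s) volume 0 t)
    (hconv : ∀ u ∈ Ioc 0 t, ∫ τ in 0..u, f (u - τ) * h τ = exp (-γ * u)) :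
    ∫ s in 0..t, f (t - s) * (h s + γ * ∫ τ in 0..s, h τ) = 1 := by
  have hfH : IntervalIntegrable (fun s => f (t - s) * ∫ τ in 0..s, h τ) volume 0 t := by
    have hf' := hf.comp_sub_left t
    rw [sub_zero, sub_self] at hf'
    exact hf'.symm.mul_continuousOn (continuousOn_primitive_interval' hh left_mem_uIcc)
  have hprimitive :
      ∫ u in 0..t, ∫ τ in 0..u, f (u - τ) * h τ = ∫ u in 0..t, exp (-γ * u) := by
    refine integral_congr_ae (Filter.Eventually.of_forall fun u hu => hconv u ?_)
    rwa [uIoc_of_le ht.le] at hu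
  calc ∫ s in 0..t, f (t - s) * (h s + γ * ∫ τ in 0..s, h τ)
      = (∫ s in 0..t, f (t - s) * h s) +
          γ * ∫ s in 0..t, f (t - s) * ∫ τ in 0..s, h τ := by
        rw [← intervalIntegral.integral_const_mul, ← integral_add hfh (hfH.const_mul γ)]
        congr 1 with s
        ring
    _ = exp (-γ * t) + γ * ∫ u in 0..t, exp (-γ * u) := by
        rw [hconv t ⟨ht, le_rfl⟩, integral_mul_primitive_eq_primitive_convolution ht.le hf hh,
          hprimitive]
    _ = 1 := by
        rw [mul_integral_exp_neg_mul, mul_zero, exp_zero]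
        ring

end Convolution

theorem intervalIntegrable_exp_mul_rpow_div (γ c : ℝ) {r : ℝ} (hr : -1 < r) (a b : ℝ) :
    IntervalIntegrable (fun s => exp (-γ * s) * s ^ r / c) volume a b :=
  ((intervalIntegrable_rpow' hr).continuousOn_mul (by fun_prop)).div_const c

theorem exp_weighted_kernel_mul_eq (α γ t s : ℝ) :
    exp (-γ * (t - s)) * (t - s) ^ (-α) / Gamma (1 - α) *
        (exp (-γ * s) * s ^ (α - 1) / Gamma α) =
      exp (-γ * t) / (Gamma α * Gamma (1 - α)) * (s ^ (α - 1) * (t - s) ^ (1 - α - 1)) := by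
  rw [show -γ * t = -γ * (t - s) + -γ * s by ring, exp_add, show 1 - α - 1 = -α by ring]
  ring

section ExpWeightedKernel

variable {α : ℝ} (γ : ℝ) {t : ℝ}

theorem intervalIntegrable_exp_weighted_kernel_mul (hα0 : 0 < α) (hα1 : α < 1) (ht : 0 < t) :
    IntervalIntegrable (fun s => exp (-γ * (t - s)) * (t - s) ^ (-α) / Gamma (1 - α) *
      (exp (-γ * s) * s ^ (α - 1) / Gamma α)) volume 0 t := by
  simp_rw [exp_weighted_kernel_mul_eq]
  exact (intervalIntegrable_rpow_mul_rpow_sub (by linarith) (by linarith) ht).const_mul _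

theorem integral_exp_weighted_kernel_mul (hα0 : 0 < α) (hα1 : α < 1) (ht : 0 < t) :
    ∫ s in 0..t, exp (-γ * (t - s)) * (t - s) ^ (-α) / Gamma (1 - α) *
      (exp (-γ * s) * s ^ (α - 1) / Gamma α) = exp (-γ * t) := by
  simp_rw [exp_weighted_kernel_mul_eq]
  rw [intervalIntegral.integral_const_mul, integral_rpow_mul_rpow_sub hα0 (sub_pos.2 hα1) ht,
    add_sub_cancel, sub_self, rpow_zero, Gamma_one, div_one, one_mul]
  have := (Gamma_pos_of_pos hα0).ne'
  have := (Gamma_pos_of_pos (sub_pos.2 hα1)).ne'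
  field_simp

end ExpWeightedKernel

theorem exp_weighted_fractional_conv_eq_one_general (α γ : ℝ)
    (hα0 : 0 < α) (hα1 : α < 1) :
    ∀ t : ℝ, 0 < t →
      (∫ s in (0:ℝ)..t,
          (Real.exp (-γ * (t - s)) * (t - s) ^ (-α) / Real.Gamma (1 - α)) *
            (Real.exp (-γ * s) * s ^ (α - 1) / Real.Gamma α +
              γ * ∫ τ in (0:ℝ)..s, Real.exp (-γ * τ) * τ ^ (α - 1) / Real.Gamma α)) = 1 := by
  intro t ht
  exact integral_convolution_add_mul_primitive_eq_one
    (f := fun x => exp (-γ * x) * x ^ (-α) / Gamma (1 - α)) ht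
    (intervalIntegrable_exp_mul_rpow_div γ _ (by linarith) 0 t)
    (intervalIntegrable_exp_mul_rpow_div γ _ (by linarith) 0 t)
    (intervalIntegrable_exp_weighted_kernel_mul γ hα0 hα1 ht)
    (fun u hu => integral_exp_weighted_kernel_mul γ hα0 hα1 hu.1)

/-- For the exponentially weighted time-fractional kernel pair
`k(t) = e^{−γt} t^{−α}/Γ(1−α)` and
`l(t) = e^{−γt} t^{α−1}/Γ(α) + γ ∫₀ᵗ e^{−γτ} τ^{α−1}/Γ(α) dτ`
with `α ∈ (0,1)`, `γ ≥ 0`, one has `(k*l)(t) = 1` for all `t > 0`. -/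
theorem exp_weighted_fractional_conv_eq_one (α γ : ℝ)
    (hα0 : 0 < α) (hα1 : α < 1) (hγ : 0 ≤ γ) :
    ∀ t : ℝ, 0 < t →
      (∫ s in (0:ℝ)..t,
          (Real.exp (-γ * (t - s)) * (t - s) ^ (-α) / Real.Gamma (1 - α)) *
            (Real.exp (-γ * s) * s ^ (α - 1) / Real.Gamma α +
              γ * ∫ τ in (0:ℝ)..s, Real.exp (-γ * τ) * τ ^ (α - 1) / Real.Gamma α)) = 1 :=
  exp_weighted_fractional_conv_eq_one_general α γ hα0 hα1
end
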